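/- arXiv:1908.10934 — 5 statements merged into one kernel-verified Lean document; each statement's English description precedes it below -/
import Mathlib

section
/- Let f be a homogeneous polynomial of degree k in x_1,...,x_n over the rationals, and define its divided symmetrization ⟨f⟩_n = Σ_{w∈S_n} w·(f / Π_{i=1}^{n-1}(x_i − x_{i+1})), where w acts by permuting variables. If k < n−1, then ⟨f⟩_n = 0. -/
open MvPolynomial

/-- The denominator `∏_{i=1}^{n-1} (x_i - x_{i+1})` of divided symmetrization. -/
noncomputable def denomDS (n : ℕ) : MvPolynomial (Fin n) ℚ :=
  ∏ i : Fin (n - 1),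
    (X (⟨i.1, by have := i.isLt; omega⟩ : Fin n) - X ⟨i.1 + 1, by have := i.isLt; omega⟩)

/-- Divided symmetrization `⟨f⟩_n = Σ_{w ∈ S_n} w·(f / ∏ (x_i - x_{i+1}))`, as an element of
the fraction field of `ℚ[x_1,...,x_n]`. -/
noncomputable def DS (n : ℕ) (f : MvPolynomial (Fin n) ℚ) :
    FractionRing (MvPolynomial (Fin n) ℚ) :=
  ∑ w : Equiv.Perm (Fin n),
    algebraMap (MvPolynomial (Fin n) ℚ) _ (rename w f) /
      algebraMap (MvPolynomial (Fin n) ℚ) _ (rename w (denomDS n))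

/-! Let `V = ∏_{i<j} (x_j - x_i)` be the Vandermonde polynomial. The denominator
`D = ∏ (x_i - x_{i+1})` divides `V`, say `V = D E`, and `w·V = sgn(w) V`; expanding each term by
`w·E` gives `⟨f⟩_n = (∑_w sgn(w) w·(f E)) / V`. The numerator is alternating, so no monomial in it
has two equal exponents and, if it is nonzero, its degree is at least `0 + 1 + ⋯ + (n-1) = deg V`.
But its degree is at most `k + deg V - (n - 1) < deg V`. -/

open Finset

theorem Finset.sum_range_card_le_sum (s : Finset ℕ) : ∑ i ∈ range s.card, i ≤ ∑ x ∈ s, x := by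
  induction s using induction_on_max with
  | empty => simp
  | insert a s hlt ih =>
    have hcard : s.card ≤ a := by
      simpa using card_le_card (fun x hx => mem_range.2 (hlt x hx))
    rw [card_insert_of_notMem (fun ha => (hlt a ha).false), sum_range_succ,
      sum_insert (fun ha => (hlt a ha).false)]
    omega

namespace MvPolynomial

section Alternating

variable {σ R : Type*} [Fintype σ] [DecidableEq σ] [CommRing R]

def IsAlternating (p : MvPolynomial σ R) : Prop :=
  ∀ w : Equiv.Perm σ, rename w p = (Equiv.Perm.sign w : ℤ) • p

theorem IsAlternating.coeff_eq_zero [IsAddTorsionFree R]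
    {p : MvPolynomial σ R} (hp : p.IsAlternating) {i j : σ} (hij : i ≠ j) {d : σ →₀ ℕ}
    (hd : d i = d j) : coeff d p = 0 := by
  have hswap : Finsupp.mapDomain (Equiv.swap i j) d = d := by
    ext a
    rw [Finsupp.mapDomain_equiv_apply, Equiv.symm_swap]
    rcases eq_or_ne a i with rfl | hai
    · simp [hd]
    rcases eq_or_ne a j with rfl | haj
    · simp [hd]
    · rw [Equiv.swap_apply_of_ne_of_ne hai haj]
  have hcoeff := coeff_rename_mapDomain _ (Equiv.swap i j).injective p d
  rw [hswap, hp, Equiv.Perm.sign_swap hij, Units.val_neg, Units.val_one, neg_one_zsmul,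
    coeff_neg] at hcoeff
  exact self_eq_neg.1 hcoeff.symm

theorem IsAlternating.eq_zero_of_totalDegree_lt [IsAddTorsionFree R] {p : MvPolynomial σ R}
    (hp : p.IsAlternating) (hdeg : p.totalDegree < ∑ i ∈ range (Fintype.card σ), i) :
    p = 0 := by
  by_contra hne
  obtain ⟨d, hd⟩ := ne_zero_iff.1 hne
  have hinj : Function.Injective d := fun i j hij => by
    by_contra hne
    exact hd (hp.coeff_eq_zero hne hij)
  have hsum : ∑ i ∈ range (Fintype.card σ), i ≤ p.totalDegree := calc
    _ = ∑ i ∈ range (univ.image d).card, i := by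
      rw [card_image_of_injective _ hinj, card_univ]
    _ ≤ ∑ x ∈ univ.image d, x := sum_range_card_le_sum _
    _ = d.sum fun _ e => e := by
      rw [sum_image fun i _ j _ h => hinj h, ← Finsupp.degree_eq_sum]
      rfl
    _ ≤ p.totalDegree := le_totalDegree (mem_support_iff.2 hd)
  omega

noncomputable def antisymmetrization (q : MvPolynomial σ R) : MvPolynomial σ R :=
  ∑ w : Equiv.Perm σ, (Equiv.Perm.sign w : ℤ) • rename w q

theorem isAlternating_antisymmetrization (q : MvPolynomial σ R) :
    (antisymmetrization q).IsAlternating := by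
  intro τ
  simp only [antisymmetrization, map_sum, map_zsmul, rename_rename, smul_sum, smul_smul]
  refine Fintype.sum_equiv (Equiv.mulLeft τ) _ _ fun w => ?_
  rw [Equiv.coe_mulLeft, Equiv.Perm.coe_mul, Equiv.Perm.sign_mul, Units.val_mul,
    ← mul_assoc, ← Units.val_mul, Int.units_mul_self, Units.val_one, one_mul]

theorem totalDegree_antisymmetrization_le (q : MvPolynomial σ R) :
    (antisymmetrization q).totalDegree ≤ q.totalDegree := by
  refine (totalDegree_finsetSum _ _).trans (Finset.sup_le fun w _ => ?_)
  exact (totalDegree_smul_le _ _).trans (totalDegree_rename_le _ _)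

end Alternating

section Vandermonde

variable (n : ℕ) (R : Type*) [CommRing R]

noncomputable def vandermonde : MvPolynomial (Fin n) R :=
  (Matrix.vandermonde (X : Fin n → MvPolynomial (Fin n) R)).det

theorem vandermonde_eq_prod :
    vandermonde n R = ∏ i : Fin n, ∏ j ∈ Ioi i, (X j - X i) :=
  Matrix.det_vandermonde _

variable {n R}

theorem isAlternating_vandermonde : (vandermonde n R).IsAlternating := by
  intro w
  have hrename : (Matrix.vandermonde (X : Fin n → MvPolynomial (Fin n) R)).map (rename w) =
      (Matrix.vandermonde X).submatrix w id := by
    ext i j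
    simp [Matrix.vandermonde_apply]
  rw [vandermonde, AlgHom.map_det, AlgHom.mapMatrix_apply, hrename,
    Matrix.det_permute, zsmul_eq_mul]

theorem isHomogeneous_vandermonde :
    (vandermonde n R).IsHomogeneous (∑ i ∈ range n, i) := by
  have hprod := IsHomogeneous.prod univ _ (fun i : Fin n => ∑ _j ∈ Ioi i, 1)
    fun i _ => IsHomogeneous.prod (Ioi i) (fun j => (X j - X i : MvPolynomial (Fin n) R))
      _ fun j _ => (isHomogeneous_X R j).sub (isHomogeneous_X R i)
  rw [← vandermonde_eq_prod] at hprod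
  convert hprod using 1
  calc ∑ i ∈ range n, i = ∑ i ∈ range n, (n - 1 - i) :=
        (sum_range_reflect _ n).symm
    _ = ∑ i : Fin n, (n - 1 - i) := (Fin.sum_univ_eq_sum_range (fun i => n - 1 - i) n).symm
    _ = ∑ i : Fin n, ∑ _j ∈ Ioi i, 1 := by simp [Fin.card_Ioi]

theorem vandermonde_ne_zero [IsDomain R] : vandermonde n R ≠ 0 :=
  Matrix.det_vandermonde_ne_zero_iff.2 X_injective

end Vandermonde

end MvPolynomial

theorem isHomogeneous_denomDS (n : ℕ) : (denomDS n).IsHomogeneous (n - 1) := by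
  unfold denomDS
  simpa using IsHomogeneous.prod univ _ (fun _ : Fin (n - 1) => 1) fun i _ =>
    (isHomogeneous_X ℚ _).sub (isHomogeneous_X ℚ _)

theorem denomDS_dvd_vandermonde (n : ℕ) : denomDS n ∣ vandermonde n ℚ := by
  cases n with
  | zero => simp [denomDS]
  | succ m =>
    change ∏ i : Fin m, (X i.castSucc - X i.succ) ∣ _
    rw [vandermonde_eq_prod, Fin.prod_univ_castSucc]
    refine Dvd.dvd.mul_right (prod_dvd_prod_of_dvd _ _ fun i _ => ?_) _
    exact (dvd_sub_comm.1 dvd_rfl).trans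
      (dvd_prod_of_mem (fun j => X j - X i.castSucc) (mem_Ioi.2 i.castSucc_lt_succ))

theorem denomDS_ne_zero (n : ℕ) : denomDS n ≠ 0 :=
  ne_zero_of_dvd_ne_zero vandermonde_ne_zero (denomDS_dvd_vandermonde n)

theorem totalDegree_add_of_vandermonde_eq_denomDS_mul {n : ℕ} {E : MvPolynomial (Fin n) ℚ}
    (hE : vandermonde n ℚ = denomDS n * E) :
    E.totalDegree + (n - 1) = ∑ i ∈ range n, i := by
  have hV : vandermonde n ℚ ≠ 0 := vandermonde_ne_zero
  rw [← isHomogeneous_vandermonde.totalDegree hV, hE,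
    totalDegree_mul_of_isDomain (denomDS_ne_zero n) (right_ne_zero_of_mul (hE ▸ hV)),
    (isHomogeneous_denomDS n).totalDegree (denomDS_ne_zero n), add_comm]

theorem DS_eq_antisymmetrization_div {n : ℕ} {E : MvPolynomial (Fin n) ℚ}
    (hE : vandermonde n ℚ = denomDS n * E) (f : MvPolynomial (Fin n) ℚ) :
    DS n f = algebraMap _ (FractionRing (MvPolynomial (Fin n) ℚ)) (antisymmetrization (f * E)) /
      algebraMap _ _ (vandermonde n ℚ) := by
  rw [DS]
  set A := algebraMap (MvPolynomial (Fin n) ℚ) (FractionRing (MvPolynomial (Fin n) ℚ))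
  have hA : ∀ {p}, p ≠ 0 → A p ≠ 0 := fun hp =>
    (map_ne_zero_iff A (IsFractionRing.injective _ _)).2 hp
  have hV : A (vandermonde n ℚ) ≠ 0 := hA vandermonde_ne_zero
  have hterm : ∀ w : Equiv.Perm (Fin n), A (rename w f) / A (rename w (denomDS n)) =
      Int.cast (Equiv.Perm.sign w : ℤ) * A (rename w (f * E)) / A (vandermonde n ℚ) := by
    intro w
    set s : FractionRing (MvPolynomial (Fin n) ℚ) := Int.cast (Equiv.Perm.sign w : ℤ)
    have hs : s * s = 1 := by
      rw [← Int.cast_mul, ← Units.val_mul, Int.units_mul_self, Units.val_one, Int.cast_one]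
    have hrename : A (rename w (denomDS n)) * A (rename w E) = s * A (vandermonde n ℚ) := by
      rw [← map_mul, ← map_mul, ← hE, isAlternating_vandermonde w, zsmul_eq_mul, map_mul,
        map_intCast]
    have hD : A (rename w (denomDS n)) ≠ 0 :=
      hA ((rename_injective _ w.injective).ne (denomDS_ne_zero n))
    rw [div_eq_div_iff hD hV, map_mul, map_mul]
    linear_combination (-s * A (rename w f)) * hrename - (A (rename w f) * A (vandermonde n ℚ)) * hs
  rw [sum_congr rfl fun w _ => hterm w, ← sum_div]
  simp only [antisymmetrization, map_sum, zsmul_eq_mul, map_mul, map_intCast]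

theorem stmt0 (n k : ℕ) (f : MvPolynomial (Fin n) ℚ)
    (hf : f.IsHomogeneous k) (hk : k < n - 1) :
    DS n f = 0 := by
  obtain ⟨E, hE⟩ := denomDS_dvd_vandermonde n
  have hdegE := totalDegree_add_of_vandermonde_eq_denomDS_mul hE
  have hdeg : (antisymmetrization (f * E)).totalDegree <
      ∑ i ∈ range (Fintype.card (Fin n)), i := calc
    _ ≤ (f * E).totalDegree := totalDegree_antisymmetrization_le _
    _ ≤ f.totalDegree + E.totalDegree := totalDegree_mul _ _
    _ ≤ k + E.totalDegree := Nat.add_le_add_right hf.totalDegree_le _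
    _ < _ := by rw [Fintype.card_fin]; omega
  rw [DS_eq_antisymmetrization_div hE,
    (isAlternating_antisymmetrization _).eq_zero_of_totalDegree_lt hdeg, map_zero, zero_div]
end

section
/- Let I be a subset of {(i,j) : 1 ≤ i < j ≤ n} and Δ_I = Π_{(i,j)∈I}(x_i − x_j). For any homogeneous polynomial f of degree k in Q[x_1,...,x_n], the rational function Σ_{w∈S_n} w·(f/Δ_I) is a symmetric polynomial; it is zero if k < |I| and is homogeneous of degree k − |I| otherwise. -/
/-!
Write `Δ_I = prodXSubX I`, let `J = ltPairs n` be the set of all pairs `i < j`, and let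
`Δ = Δ_J` be the Vandermonde product. Since `Δ = Δ_I * Δ_{J \ I}` and `w • Δ = sign w • Δ`, the symmetrization equals `P / Δ` with
`P = ∑ w, sign w • w (f * Δ_{J \ I})`, an alternating polynomial, homogeneous of degree
`k + |J \ I|`. An alternating polynomial vanishes under `X i ↦ X j`, so it is divisible by each
of the pairwise non-associated primes `X i - X j`, hence by `Δ`. The quotient `P / Δ` is then
symmetric, and homogeneous of degree `k - |I|` (zero if `k < |I|`) because `Δ` is homogeneous
of degree `|J|`.
-/

open MvPolynomial Finset Equiv

namespace MvPolynomial

variable {σ R : Type*} [CommRing R]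

section Homogeneous

attribute [local instance] gradedAlgebra in
theorem homogeneousComponent_add_mul_of_isHomogeneous {D : MvPolynomial σ R} {a : ℕ}
    (hD : D.IsHomogeneous a) (g : MvPolynomial σ R) (d : ℕ) :
    homogeneousComponent (a + d) (D * g) = D * homogeneousComponent d g := by
  simpa only [DirectSum.decompose, Equiv.coe_fn_mk, decomposition.decompose'_apply] using
    DirectSum.coe_decompose_mul_add_of_left_mem (𝒜 := homogeneousSubmodule σ R) (b := g) (j := d)
      hD

variable [IsDomain R] {D g : MvPolynomial σ R} {a b : ℕ}

theorem IsHomogeneous.of_mul_left (hD : D.IsHomogeneous a) (hD0 : D ≠ 0)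
    (h : (D * g).IsHomogeneous b) : g.IsHomogeneous (b - a) := by
  intro d hd
  have hcomp : homogeneousComponent d.degree g ≠ 0 := fun h0 => hd <| by
    simpa [coeff_homogeneousComponent] using congrArg (coeff d) h0
  have hab : a + d.degree = b := by
    by_contra hne
    have := homogeneousComponent_add_mul_of_isHomogeneous hD g d.degree
    rw [homogeneousComponent_of_mem ((mem_homogeneousSubmodule _ _).mpr h), if_neg hne] at this
    exact mul_ne_zero hD0 hcomp this.symm
  rw [show (1 : σ → ℕ) = fun _ => 1 from rfl, ← Finsupp.degree_eq_weight_one]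
  omega

theorem IsHomogeneous.eq_zero_of_mul_left (hD : D.IsHomogeneous a) (hD0 : D ≠ 0)
    (h : (D * g).IsHomogeneous b) (hba : b < a) : g = 0 := by
  by_contra hg
  have := h.totalDegree (mul_ne_zero hD0 hg)
  rw [totalDegree_mul_of_isDomain hD0 hg, hD.totalDegree hD0] at this
  omega

end Homogeneous

section Transposition

variable [DecidableEq σ] (i j : σ)

theorem X_sub_X_dvd_sub_rename_update (P : MvPolynomial σ R) :
    X i - X j ∣ P - rename (Function.update id i j) P := by
  rw [← Ideal.mem_span_singleton, ← Ideal.Quotient.eq]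
  change Ideal.Quotient.mkₐ R _ P = ((Ideal.Quotient.mkₐ R _).comp (rename _)) P
  congr 1
  refine algHom_ext fun m => ?_
  obtain rfl | hm := eq_or_ne m i
  · simp [Ideal.Quotient.eq]
  · simp [hm]

theorem X_sub_X_dvd_of_rename_swap_eq_neg [IsDomain R] [NeZero (2 : R)]
    {P : MvPolynomial σ R} (h : rename (swap i j) P = -P) : X i - X j ∣ P := by
  have hu : Function.update id i j ∘ swap i j = Function.update id i j := by
    funext m
    obtain rfl | hmi := eq_or_ne m i
    · obtain rfl | hij := eq_or_ne m j <;> simp [Function.update_apply, *]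
    obtain rfl | hmj := eq_or_ne m j <;> simp [swap_apply_of_ne_of_ne, *]
  have h0 : rename (Function.update id i j) P = 0 := by
    have : rename (Function.update id i j) P = - rename (Function.update id i j) P := by
      rw [← map_neg, ← h, rename_rename, hu]
    have h2 : (2 : MvPolynomial σ R) ≠ 0 := by
      rw [← map_ofNat (C (σ := σ)) 2, Ne, C_eq_zero]
      exact two_ne_zero
    exact (mul_eq_zero.mp (by rw [two_mul]; exact eq_neg_iff_add_eq_zero.mp this)).resolve_left h2
  simpa [h0] using X_sub_X_dvd_sub_rename_update i j P

theorem eq_or_eq_swap_of_X_sub_X_dvd [Nontrivial R] {k l : σ} (hkl : k ≠ l)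
    (h : (X i - X j : MvPolynomial σ R) ∣ X k - X l) :
    (k = i ∧ l = j) ∨ (k = j ∧ l = i) := by
  obtain ⟨c, hc⟩ := h
  have : rename (Function.update id i j) (X k - X l : MvPolynomial σ R) = 0 := by
    simp [hc, Function.update_apply]
  simp only [map_sub, rename_X, sub_eq_zero, X_injective.eq_iff, Function.update_apply] at this
  split_ifs at this <;> grind

end Transposition

theorem prime_X_sub_X [IsDomain R] {i j : σ} (hij : i ≠ j) :
    Prime (X i - X j : MvPolynomial σ R) := by
  classical
  let e : σ ≃ Option {b : σ // b ≠ i} := (Equiv.optionSubtypeNe i).symm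
  let Φ := (renameEquiv R e).trans (optionEquivLeft R {b : σ // b ≠ i})
  rw [← MulEquiv.prime_iff Φ.toMulEquiv]
  have h1 : Φ (X i - X j) = Polynomial.X - Polynomial.C (X ⟨j, hij.symm⟩) := by
    have hi : e i = none := Equiv.optionSubtypeNe_symm_self i
    have hj : e j = some ⟨j, hij.symm⟩ := Equiv.optionSubtypeNe_symm_of_ne hij.symm
    simp only [Φ, AlgEquiv.trans_apply, map_sub, renameEquiv_apply, rename_X, hi, hj,
      optionEquivLeft_X_none, optionEquivLeft_X_some]
  exact h1 ▸ Polynomial.prime_X_sub_C _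

section Vandermonde

noncomputable def prodXSubX (I : Finset (σ × σ)) : MvPolynomial σ R :=
  ∏ p ∈ I, (X p.1 - X p.2)

theorem isHomogeneous_prodXSubX (I : Finset (σ × σ)) :
    (prodXSubX I : MvPolynomial σ R).IsHomogeneous #I := by
  simpa [prodXSubX] using IsHomogeneous.prod I _ (fun _ => 1)
    fun p _ => (isHomogeneous_X R p.1).sub (isHomogeneous_X R p.2)

theorem prodXSubX_ne_zero [IsDomain R] {I : Finset (σ × σ)} (hI : ∀ p ∈ I, p.1 ≠ p.2) :
    (prodXSubX I : MvPolynomial σ R) ≠ 0 :=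
  prod_ne_zero_iff.mpr fun p hp => sub_ne_zero.mpr fun h => hI p hp (X_injective h)

theorem prodXSubX_sdiff_mul_prodXSubX [DecidableEq σ] {I J : Finset (σ × σ)} (h : I ⊆ J) :
    (prodXSubX (J \ I) : MvPolynomial σ R) * prodXSubX I = prodXSubX J :=
  prod_sdiff h

def ltPairs (n : ℕ) : Finset (Fin n × Fin n) := {p | p.1 < p.2}

variable {n : ℕ}

-- `Matrix.det_vandermonde` gives `∏_{i<j} (v j - v i)`; `v = -X` turns it into `Δ`.
theorem prodXSubX_ltPairs_eq_det :
    (prodXSubX (ltPairs n) : MvPolynomial (Fin n) R) =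
      (Matrix.vandermonde fun i => -X i).det := by
  rw [Matrix.det_vandermonde, prodXSubX, ltPairs, prod_filter, ← univ_product_univ, prod_product]
  refine prod_congr rfl fun i _ => ?_
  rw [← filter_lt_eq_Ioi, prod_filter]
  simp [neg_add_eq_sub]

theorem rename_prodXSubX_ltPairs (w : Perm (Fin n)) :
    rename w (prodXSubX (ltPairs n) : MvPolynomial (Fin n) R) =
      Perm.sign w • prodXSubX (ltPairs n) := by
  rw [prodXSubX_ltPairs_eq_det, AlgHom.map_det]
  have : (rename (R := R) w).mapMatrix (Matrix.vandermonde fun i => -X i) =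
      (Matrix.vandermonde fun i => -X i).submatrix w id := by
    ext i j
    simp [Matrix.vandermonde]
  rw [this, Matrix.det_permute, Units.smul_def, zsmul_eq_mul]

theorem prodXSubX_ltPairs_ne_zero [IsDomain R] :
    (prodXSubX (ltPairs n) : MvPolynomial (Fin n) R) ≠ 0 :=
  prodXSubX_ne_zero fun _ hp => (mem_filter.mp hp).2.ne

theorem prodXSubX_ltPairs_dvd [IsDomain R] [UniqueFactorizationMonoid R] [NeZero (2 : R)]
    {P : MvPolynomial (Fin n) R} (hP : ∀ w : Perm (Fin n), rename w P = Perm.sign w • P) :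
    prodXSubX (ltPairs n) ∣ P := by
  refine Finset.prod_dvd_of_isRelPrime ?_ fun p hp => ?_
  · intro p hp q hq hpq
    have hp_lt := (mem_filter.mp hp).2
    have hq_lt := (mem_filter.mp hq).2
    refine ((prime_X_sub_X hp_lt.ne).irreducible.isRelPrime_iff_not_dvd).mpr fun hdvd => ?_
    rcases eq_or_eq_swap_of_X_sub_X_dvd _ _ hq_lt.ne hdvd with ⟨h1, h2⟩ | ⟨h1, h2⟩
    · exact hpq (Prod.ext h1 h2).symm
    · exact hp_lt.asymm (h2 ▸ h1 ▸ hq_lt)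
  · refine X_sub_X_dvd_of_rename_swap_eq_neg _ _ ?_
    rw [hP, Perm.sign_swap (mem_filter.mp hp).2.ne, Units.neg_smul, one_smul]

theorem isSymmetric_of_prodXSubX_ltPairs_mul [IsDomain R] {g : MvPolynomial (Fin n) R}
    (h : ∀ w : Perm (Fin n),
      rename w (prodXSubX (ltPairs n) * g) = Perm.sign w • (prodXSubX (ltPairs n) * g)) :
    g.IsSymmetric := by
  intro w
  have := h w
  rw [map_mul, rename_prodXSubX_ltPairs, smul_mul_assoc] at this
  exact mul_left_cancel₀ prodXSubX_ltPairs_ne_zero (MulAction.injective (Perm.sign w) this)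

end Vandermonde

section Alternatization

variable [Fintype σ] [DecidableEq σ]

noncomputable def alternatization (h : MvPolynomial σ R) : MvPolynomial σ R :=
  ∑ w : Perm σ, Perm.sign w • rename w h

theorem rename_alternatization (h : MvPolynomial σ R) (w : Perm σ) :
    rename w (alternatization h) = Perm.sign w • alternatization h := by
  rw [alternatization, map_sum, smul_sum]
  refine Fintype.sum_equiv (Equiv.mulLeft w) _ _ fun v => ?_
  rw [Units.smul_def, map_zsmul, ← Units.smul_def, rename_rename, coe_mulLeft, Perm.sign_mul,
    smul_smul, ← mul_assoc, Int.units_mul_self, one_mul, Perm.coe_mul]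

theorem IsHomogeneous.alternatization {h : MvPolynomial σ R} {k : ℕ} (hh : h.IsHomogeneous k) :
    (alternatization h).IsHomogeneous k :=
  IsHomogeneous.sum _ _ _ fun w _ => by
    rw [Units.smul_def, ← mem_homogeneousSubmodule]
    exact zsmul_mem ((mem_homogeneousSubmodule _ _).mpr (hh.rename_isHomogeneous)) _

end Alternatization

theorem sum_div_rename_prodXSubX [IsDomain R] {n : ℕ} {F : Type*} [Field F]
    [Algebra (MvPolynomial (Fin n) R) F] [IsFractionRing (MvPolynomial (Fin n) R) F]
    (f : MvPolynomial (Fin n) R) {I : Finset (Fin n × Fin n)} (hI : I ⊆ ltPairs n) :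
    ∑ w : Perm (Fin n), algebraMap _ F (rename w f) /
        algebraMap _ F (rename w (prodXSubX I : MvPolynomial (Fin n) R)) =
      algebraMap _ F (alternatization (f * prodXSubX (ltPairs n \ I))) /
        algebraMap (MvPolynomial (Fin n) R) F (prodXSubX (ltPairs n)) := by
  have hι := IsFractionRing.injective (MvPolynomial (Fin n) R) F
  have hI0 : (prodXSubX I : MvPolynomial (Fin n) R) ≠ 0 :=
    prodXSubX_ne_zero fun p hp => (mem_filter.mp (hI hp)).2.ne
  rw [alternatization, map_sum, sum_div]
  refine sum_congr rfl fun w _ => ?_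
  have hwI0 : rename w (prodXSubX I : MvPolynomial (Fin n) R) ≠ 0 :=
    (map_ne_zero_iff _ (rename_injective _ w.injective)).mpr hI0
  rw [div_eq_div_iff ((map_ne_zero_iff _ hι).mpr hwI0)
    ((map_ne_zero_iff _ hι).mpr prodXSubX_ltPairs_ne_zero), ← map_mul, ← map_mul]
  congr 1
  calc rename w f * prodXSubX (ltPairs n)
      = Perm.sign w • Perm.sign w • (rename w f * prodXSubX (ltPairs n)) := by
        rw [smul_smul, Int.units_mul_self, one_smul]
    _ = Perm.sign w • rename w (f * (prodXSubX (ltPairs n \ I) * prodXSubX I)) := by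
        rw [prodXSubX_sdiff_mul_prodXSubX hI, map_mul, rename_prodXSubX_ltPairs, mul_smul_comm]
    _ = Perm.sign w • rename w (f * prodXSubX (ltPairs n \ I)) * rename w (prodXSubX I) := by
        rw [smul_mul_assoc, ← map_mul, mul_assoc]

end MvPolynomial

/-- For a set `I` of pairs `(i,j)` with `i < j`, the symmetrization
`Σ_{w ∈ S_n} w·(f/Δ_I)` where `Δ_I = ∏_{(i,j)∈I}(x_i - x_j)` is a symmetric polynomial;
it is zero if `deg f < |I|` and homogeneous of degree `deg f - |I|` otherwise. -/
theorem stmt2 (n k : ℕ) (I : Finset (Fin n × Fin n)) (hI : ∀ p ∈ I, p.1 < p.2)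
    (f : MvPolynomial (Fin n) ℚ) (hf : f.IsHomogeneous k) :
    ∃ g : MvPolynomial (Fin n) ℚ, g.IsSymmetric ∧
      (∑ w : Equiv.Perm (Fin n),
          algebraMap (MvPolynomial (Fin n) ℚ) (FractionRing (MvPolynomial (Fin n) ℚ))
            (rename w f) /
            algebraMap (MvPolynomial (Fin n) ℚ) (FractionRing (MvPolynomial (Fin n) ℚ))
            (rename w (∏ p ∈ I, (X p.1 - X p.2)))) =
        algebraMap (MvPolynomial (Fin n) ℚ) (FractionRing (MvPolynomial (Fin n) ℚ)) g ∧
      (k < I.card → g = 0) ∧ (I.card ≤ k → g.IsHomogeneous (k - I.card)) := by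
  have hIJ : I ⊆ ltPairs n := fun p hp => mem_filter.mpr ⟨mem_univ _, hI p hp⟩
  have hanti := rename_alternatization (f * prodXSubX (ltPairs n \ I))
  have hP : (alternatization (f * prodXSubX (ltPairs n \ I))).IsHomogeneous
      (k + #(ltPairs n \ I)) :=
    (hf.mul (isHomogeneous_prodXSubX _)).alternatization
  obtain ⟨g, hg⟩ := prodXSubX_ltPairs_dvd hanti
  have hcard : #(ltPairs n \ I) + #I = #(ltPairs n) := card_sdiff_add_card_eq_card hIJ
  have hΔ := isHomogeneous_prodXSubX (R := ℚ) (ltPairs n)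
  rw [hg] at hP hanti
  refine ⟨g, isSymmetric_of_prodXSubX_ltPairs_mul hanti, ?_,
    fun hk => hΔ.eq_zero_of_mul_left prodXSubX_ltPairs_ne_zero hP (by omega), fun hk => ?_⟩
  · rw [← prodXSubX, sum_div_rename_prodXSubX f hIJ, hg, map_mul,
      mul_div_cancel_left₀ _
        ((map_ne_zero_iff _ (IsFractionRing.injective _ _)).mpr prodXSubX_ltPairs_ne_zero)]
  · simpa [show k + #(ltPairs n \ I) - #(ltPairs n) = k - #I by omega] using
      hΔ.of_mul_left prodXSubX_ltPairs_ne_zero hP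
end

section
/- For 1 ≤ i ≤ n, let X_i = Π_{j≠i, 1≤j≤n} x_j be the product of all variables except x_i. Then ⟨X_i⟩_n = (−1)^{n−i}·C(n−1, i−1). -/
open MvPolynomial

namespace DSAux
variable {K : Type*} [Field K]

/-- product of consecutive differences -/
def den : List K → K
  | [] => 1
  | [_] => 1
  | a :: b :: t => (a - b) * den (b :: t)

@[simp] lemma den_nil : den ([] : List K) = 1 := rfl
@[simp] lemma den_single (a : K) : den [a] = 1 := rfl
lemma den_cons₂ (a b : K) (t : List K) : den (a :: b :: t) = (a - b) * den (b :: t) := rfl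

/-- product of all but last, over den -/
def Tf (l : List K) : K := l.dropLast.prod / den l
/-- product of all but first, over den -/
def Tg (l : List K) : K := l.tail.prod / den l

@[simp] lemma Tf_nil : Tf ([] : List K) = 1 := by simp [Tf]
@[simp] lemma Tf_single (a : K) : Tf [a] = 1 := by simp [Tf]
@[simp] lemma Tg_nil : Tg ([] : List K) = 1 := by simp [Tg]
@[simp] lemma Tg_single (a : K) : Tg [a] = 1 := by simp [Tg]

lemma Tf_cons₂ (a b : K) (t : List K) : Tf (a :: b :: t) = a / (a - b) * Tf (b :: t) := by
  simp only [Tf, den_cons₂, List.dropLast_cons₂, List.prod_cons]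
  rw [div_mul_div_comm, mul_comm (a-b)]

lemma Tg_cons₂ (a b : K) (t : List K) : Tg (a :: b :: t) = b / (a - b) * Tg (b :: t) := by
  simp only [Tg, den_cons₂, List.tail_cons, List.prod_cons]
  rw [div_mul_div_comm]



lemma helperMul {c : K} (M : List (List K)) (f : List K → K) :
    (M.map (fun m => c * f m)).sum = c * (M.map f).sum := by
  induction M with
  | nil => simp
  | cons a t ih => simp [ih, mul_add]

lemma key_alg (z y u t : K) (hzy : z ≠ y) (hzu : z ≠ u) (hyu : y ≠ u) :
    z/(z-y)*(y/(y-u)*t) + (y/(y-z)*(z/(z-u)*t) + y/(y-u)*(t - z/(z-u)*t)) = y/(y-u)*t := by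
  have h1 : z - y ≠ 0 := sub_ne_zero.mpr hzy
  have h2 : y - z ≠ 0 := sub_ne_zero.mpr hzy.symm
  have h3 : z - u ≠ 0 := sub_ne_zero.mpr hzu
  have h4 : y - u ≠ 0 := sub_ne_zero.mpr hyu
  field_simp
  ring

lemma insT (z : K) : ∀ l : List K, (z :: l).Nodup →
    ((List.permutations'Aux z l).map Tf).sum = Tf l := by
  intro l
  induction l with
  | nil => intro _; show Tf [z] + 0 = Tf []; simp
  | cons y ys ih =>
    intro h
    match ys, ih, h with
    | [], _, h =>
      have hzy : z ≠ y := by simp at h; tauto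
      show Tf [z, y] + (Tf [y, z] + 0) = Tf [y]
      rw [Tf_cons₂, Tf_cons₂]
      simp only [Tf_single, add_zero, mul_one]
      have h1 : z - y ≠ 0 := sub_ne_zero.mpr hzy
      have h2 : y - z ≠ 0 := sub_ne_zero.mpr hzy.symm
      field_simp
      ring
    | u :: us, ih, h =>
      have hzy : z ≠ y := by simp at h; tauto
      have hzu : z ≠ u := by simp at h; tauto
      have hyu : y ≠ u := by simp at h; tauto
      have h' : (z :: u :: us).Nodup := by
        simp only [List.nodup_cons] at h ⊢
        simp at h ⊢
        tauto
      have hsum := ih h'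
      have e1 : List.permutations'Aux z (u :: us)
          = (z :: u :: us) :: (List.permutations'Aux z us).map (u :: ·) := rfl
      have e2 : List.permutations'Aux z (y :: u :: us)
          = (z :: y :: u :: us) :: (List.permutations'Aux z (u :: us)).map (y :: ·) := rfl
      rw [e1] at hsum
      simp only [List.map_cons, List.sum_cons, List.map_map, Function.comp_def] at hsum
      rw [e2, e1]
      simp only [List.map_cons, List.sum_cons, List.map_map, Function.comp_def]
      have key : ((List.permutations'Aux z us).map (fun m => Tf (y :: u :: m))).sum
          = y/(y-u) * ((List.permutations'Aux z us).map (fun m => Tf (u :: m))).sum := by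
        rw [← helperMul]
        exact congrArg List.sum (List.map_congr_left fun m _ => Tf_cons₂ y u m)
      rw [key]
      have hSval : ((List.permutations'Aux z us).map (fun m => Tf (u :: m))).sum
          = Tf (u :: us) - Tf (z :: u :: us) := eq_sub_of_add_eq' hsum
      rw [hSval]
      rw [Tf_cons₂ z y, Tf_cons₂ y u, Tf_cons₂ y z, Tf_cons₂ z u]
      exact key_alg z y u (Tf (u :: us)) hzy hzu hyu


lemma key_alg' (z y u t : K) (hzy : z ≠ y) (hzu : z ≠ u) (hyu : y ≠ u) :
    y/(z-y)*(u/(y-u)*t) + (z/(y-z)*(u/(z-u)*t) + u/(y-u)*(-t - u/(z-u)*t)) = -(u/(y-u)*t) := by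
  have h1 : z - y ≠ 0 := sub_ne_zero.mpr hzy
  have h2 : y - z ≠ 0 := sub_ne_zero.mpr hzy.symm
  have h3 : z - u ≠ 0 := sub_ne_zero.mpr hzu
  have h4 : y - u ≠ 0 := sub_ne_zero.mpr hyu
  field_simp
  ring

lemma insTg (z : K) : ∀ l : List K, (z :: l).Nodup → l ≠ [] →
    ((List.permutations'Aux z l).map Tg).sum = -Tg l := by
  intro l
  induction l with
  | nil => intro _ hne; exact absurd rfl hne
  | cons y ys ih =>
    intro h _
    match ys, ih, h with
    | [], _, h =>
      have hzy : z ≠ y := by simp at h; tauto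
      show Tg [z, y] + (Tg [y, z] + 0) = -Tg [y]
      rw [Tg_cons₂, Tg_cons₂]
      simp only [Tg_single, add_zero, mul_one]
      have h1 : z - y ≠ 0 := sub_ne_zero.mpr hzy
      have h2 : y - z ≠ 0 := sub_ne_zero.mpr hzy.symm
      field_simp
      ring
    | u :: us, ih, h =>
      have hzy : z ≠ y := by simp at h; tauto
      have hzu : z ≠ u := by simp at h; tauto
      have hyu : y ≠ u := by simp at h; tauto
      have h' : (z :: u :: us).Nodup := by
        simp only [List.nodup_cons] at h ⊢
        simp at h ⊢
        tauto
      have hsum := ih h' (by simp)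
      have e1 : List.permutations'Aux z (u :: us)
          = (z :: u :: us) :: (List.permutations'Aux z us).map (u :: ·) := rfl
      have e2 : List.permutations'Aux z (y :: u :: us)
          = (z :: y :: u :: us) :: (List.permutations'Aux z (u :: us)).map (y :: ·) := rfl
      rw [e1] at hsum
      simp only [List.map_cons, List.sum_cons, List.map_map, Function.comp_def] at hsum
      rw [e2, e1]
      simp only [List.map_cons, List.sum_cons, List.map_map, Function.comp_def]
      have key : ((List.permutations'Aux z us).map (fun m => Tg (y :: u :: m))).sum
          = u/(y-u) * ((List.permutations'Aux z us).map (fun m => Tg (u :: m))).sum := by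
        rw [← helperMul]
        exact congrArg List.sum (List.map_congr_left fun m _ => Tg_cons₂ y u m)
      rw [key]
      have hSval : ((List.permutations'Aux z us).map (fun m => Tg (u :: m))).sum
          = -Tg (u :: us) - Tg (z :: u :: us) := eq_sub_of_add_eq' hsum
      rw [hSval]
      rw [Tg_cons₂ z y, Tg_cons₂ y u, Tg_cons₂ y z, Tg_cons₂ z u]
      exact key_alg' z y u (Tg (u :: us)) hzy hzu hyu


lemma sum_map_flatMap {α β : Type*} (L : List α) (f : α → List β) (g : β → K) :
    ((L.flatMap f).map g).sum = (L.map (fun a => ((f a).map g).sum)).sum := by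
  rw [List.map_flatMap]
  induction L with
  | nil => rfl
  | cons a t ih => simp [ih]

lemma perms'_cons {α : Type*} (t : α) (ts : List α) :
    (t :: ts).permutations' = (ts.permutations').flatMap (List.permutations'Aux t) := rfl

lemma sumT : ∀ l : List K, l.Nodup → ((l.permutations').map Tf).sum = 1 := by
  intro l
  induction l with
  | nil => intro _; show Tf [] + 0 = 1; simp
  | cons t ts ih =>
    intro h
    rw [perms'_cons, sum_map_flatMap]
    have h1 : t ∉ ts := (List.nodup_cons.mp h).1
    have h2 : ts.Nodup := (List.nodup_cons.mp h).2
    have : ∀ p ∈ ts.permutations',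
        ((List.permutations'Aux t p).map Tf).sum = Tf p := by
      intro p hp
      have hperm : List.Perm p ts := List.mem_permutations'.mp hp
      exact insT t p (List.nodup_cons.mpr ⟨fun hc => h1 (hperm.mem_iff.mp hc), hperm.nodup_iff.mpr h2⟩)
    rw [List.map_congr_left this]
    exact ih h2

lemma sumTg : ∀ l : List K, l.Nodup → l ≠ [] →
    ((l.permutations').map Tg).sum = (-1 : K) ^ (l.length - 1) := by
  intro l
  induction l with
  | nil => intro _ hne; exact absurd rfl hne
  | cons t ts ih =>
    intro h _
    rw [perms'_cons, sum_map_flatMap]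
    have h1 : t ∉ ts := (List.nodup_cons.mp h).1
    have h2 : ts.Nodup := (List.nodup_cons.mp h).2
    rcases ts with _ | ⟨u, us⟩
    · show (Tg [t] + 0) + 0 = _
      simp
    · have : ∀ p ∈ (u :: us).permutations',
          ((List.permutations'Aux t p).map Tg).sum = -Tg p := by
        intro p hp
        have hperm : List.Perm p (u :: us) := List.mem_permutations'.mp hp
        have hpne : p ≠ [] := by
          intro hc; rw [hc] at hperm
          exact absurd hperm.symm (by simp)
        exact insTg t p (List.nodup_cons.mpr
          ⟨fun hc => h1 (hperm.mem_iff.mp hc), hperm.nodup_iff.mpr h2⟩) hpne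
      rw [List.map_congr_left this]
      have hneg : (((u :: us).permutations').map (fun p => -Tg p)).sum
          = -(((u :: us).permutations').map Tg).sum := by
        rw [show (fun p : List K => -Tg p) = (fun p => (-1:K) * Tg p) by funext p; ring,
          helperMul]
        ring
      rw [hneg, ih h2 (by simp)]
      simp only [List.length_cons, Nat.add_sub_cancel]
      rw [pow_succ]
      ring


lemma split_ins (z : K) (g : List K → K) :
    ∀ (p : List K) (s : ℕ) (f : List K → K), 1 ≤ s → s ≤ p.length →
    ((List.permutations'Aux z p).map (fun m => f (m.take s) * g (m.drop s))).sum
      = ((List.permutations'Aux z (p.take (s-1))).map f).sum * g (p.drop (s-1))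
        + f (p.take s) * ((List.permutations'Aux z (p.drop s)).map g).sum := by
  intro p
  induction p with
  | nil => intro s f h1 h2; simp at h2; omega
  | cons y ys ih =>
    intro s f h1 h2
    match s, h1 with
    | 1, _ =>
      have e2 : List.permutations'Aux z (y :: ys)
          = (z :: y :: ys) :: (List.permutations'Aux z ys).map (y :: ·) := rfl
      rw [e2]
      simp only [List.map_cons, List.sum_cons, List.map_map, Function.comp_def,
        List.take_succ_cons, List.take_zero, List.drop_succ_cons, List.drop_zero,
        Nat.sub_self]
      show f [z] * g (y :: ys) + ((List.permutations'Aux z ys).map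
          (fun m => f ((y :: m).take 1) * g ((y :: m).drop 1))).sum = _
      have : ∀ m ∈ List.permutations'Aux z ys,
          f ((y :: m).take 1) * g ((y :: m).drop 1) = f [y] * g m := by
        intro m _
        simp
      rw [List.map_congr_left this, helperMul]
      show _ = (f [z] + 0) * g (y :: ys) + f [y] * ((List.permutations'Aux z ys).map g).sum
      ring
    | (s'' + 2), _ =>
      have hlen : s'' + 1 ≤ ys.length := by
        simpa using h2
      have e2 : List.permutations'Aux z (y :: ys)
          = (z :: y :: ys) :: (List.permutations'Aux z ys).map (y :: ·) := rfl
      rw [e2]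
      simp only [List.map_cons, List.sum_cons, List.map_map, Function.comp_def]
      have step1 : ∀ m ∈ List.permutations'Aux z ys,
          f ((y :: m).take (s'' + 2)) * g ((y :: m).drop (s'' + 2))
            = (fun l => f (y :: l)) (m.take (s'' + 1)) * g (m.drop (s'' + 1)) := by
        intro m _
        simp [List.take_succ_cons, List.drop_succ_cons]
      rw [List.map_congr_left step1]
      rw [ih (s'' + 1) (fun l => f (y :: l)) (by omega) hlen]
      beta_reduce
      -- now unfold RHS
      have e3 : (y :: ys).take (s'' + 2 - 1) = y :: ys.take (s'' + 1 - 1) := rfl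
      have e4 : (y :: ys).drop (s'' + 2 - 1) = ys.drop (s'' + 1 - 1) := rfl
      have e5 : (y :: ys).take (s'' + 2) = y :: ys.take (s'' + 1) := rfl
      have e6 : (y :: ys).drop (s'' + 2) = ys.drop (s'' + 1) := rfl
      rw [e3, e4, e5, e6]
      have e7 : List.permutations'Aux z (y :: ys.take (s'' + 1 - 1))
          = (z :: y :: ys.take (s'' + 1 - 1))
            :: (List.permutations'Aux z (ys.take (s'' + 1 - 1))).map (y :: ·) := rfl
      rw [e7]
      simp only [List.map_cons, List.sum_cons, List.map_map, Function.comp_def]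
      have e8 : (z :: y :: ys).take (s'' + 2) = z :: y :: ys.take (s'' + 1 - 1) := by
        simp [List.take_succ_cons]
      have e9 : (z :: y :: ys).drop (s'' + 2) = ys.drop (s'' + 1 - 1) := by
        simp [List.drop_succ_cons]
      rw [e8, e9]
      ring


lemma helperSub (M : List (List K)) (f g : List K → K) :
    (M.map (fun m => f m - g m)).sum = (M.map f).sum - (M.map g).sum := by
  induction M with
  | nil => simp
  | cons a t ih => simp [ih]; ring

lemma Alem : ∀ l : List K, l.Nodup → ∀ s : ℕ, s < l.length →
    ((l.permutations').map (fun m => Tf (m.take s) * Tg (m.drop s))).sum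
      = (-1 : K) ^ (l.length - s - 1) * ((l.length).choose s : K) := by
  intro l
  induction l with
  | nil => intro _ s hs; simp at hs
  | cons z ts ih =>
    intro h s hs
    have hz : z ∉ ts := (List.nodup_cons.mp h).1
    have hts : ts.Nodup := (List.nodup_cons.mp h).2
    rcases Nat.eq_zero_or_pos s with hs0 | hs1
    · subst hs0
      have : ∀ m ∈ (z :: ts).permutations',
          Tf (m.take 0) * Tg (m.drop 0) = Tg m := by
        intro m _
        simp
      rw [List.map_congr_left this, sumTg _ h (by simp)]
      simp
    · -- s ≥ 1
      rw [perms'_cons, sum_map_flatMap]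
      have hsts : s ≤ ts.length := by simpa using Nat.lt_succ_iff.mp (by simpa using hs)
      -- facts per p
      have hfacts : ∀ p ∈ ts.permutations', List.Perm p ts := fun p hp =>
        List.mem_permutations'.mp hp
      rcases Nat.lt_or_ge s ts.length with hlt | hge
      · -- s < ts.length
        have key : ∀ p ∈ ts.permutations',
            ((List.permutations'Aux z p).map
              (fun m => Tf (m.take s) * Tg (m.drop s))).sum
            = Tf (p.take (s-1)) * Tg (p.drop (s-1)) - Tf (p.take s) * Tg (p.drop s) := by
          intro p hp
          have hperm := hfacts p hp
          have hplen : p.length = ts.length := hperm.length_eq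
          have hpn : p.Nodup := hperm.nodup_iff.mpr hts
          have hzp : z ∉ p := fun hc => hz (hperm.mem_iff.mp hc)
          rw [split_ins z Tg p s Tf hs1 (by omega)]
          have h1 : ((List.permutations'Aux z (p.take (s-1))).map Tf).sum
              = Tf (p.take (s-1)) := by
            apply insT
            refine List.nodup_cons.mpr ⟨fun hc => hzp ((p.take_sublist (s-1)).mem hc), ?_⟩
            exact hpn.sublist (p.take_sublist (s-1))
          have h2 : ((List.permutations'Aux z (p.drop s)).map Tg).sum
              = -Tg (p.drop s) := by
            apply insTg
            · refine List.nodup_cons.mpr ⟨fun hc => hzp ((p.drop_sublist s).mem hc), ?_⟩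
              exact hpn.sublist (p.drop_sublist s)
            · intro hc
              have := congrArg List.length hc
              simp [hplen] at this
              omega
          rw [h1, h2]
          ring
        rw [List.map_congr_left key, helperSub]
        rw [ih hts (s-1) (by omega), ih hts s (by omega)]
        -- arithmetic
        obtain ⟨s'', rfl⟩ : ∃ s'', s = s'' + 1 := ⟨s - 1, by omega⟩
        simp only [Nat.add_sub_cancel, List.length_cons]
        obtain ⟨e, he⟩ : ∃ e, ts.length - s'' - 1 = e + 1 := ⟨ts.length - s'' - 2, by omega⟩
        have he2 : ts.length - (s'' + 1) - 1 = e := by omega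
        have he3 : ts.length + 1 - (s'' + 1) - 1 = e + 1 := by omega
        rw [he, he2, he3]
        have hch : ((ts.length + 1).choose (s'' + 1) : K)
            = (ts.length.choose s'' : K) + (ts.length.choose (s'' + 1) : K) := by
          rw [Nat.choose_succ_succ]
          push_cast
          ring
        rw [hch]
        ring
      · -- s = ts.length
        have hseq : s = ts.length := le_antisymm hsts hge
        subst hseq
        have key : ∀ p ∈ ts.permutations',
            ((List.permutations'Aux z p).map
              (fun m => Tf (m.take ts.length) * Tg (m.drop ts.length))).sum
            = Tf (p.take (ts.length - 1)) * Tg (p.drop (ts.length - 1)) + Tf p := by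
          intro p hp
          have hperm := hfacts p hp
          have hplen : p.length = ts.length := hperm.length_eq
          have hpn : p.Nodup := hperm.nodup_iff.mpr hts
          have hzp : z ∉ p := fun hc => hz (hperm.mem_iff.mp hc)
          rw [split_ins z Tg p ts.length Tf hs1 (by omega)]
          have h1 : ((List.permutations'Aux z (p.take (ts.length - 1))).map Tf).sum
              = Tf (p.take (ts.length - 1)) := by
            apply insT
            refine List.nodup_cons.mpr ⟨fun hc => hzp ((p.take_sublist _).mem hc), ?_⟩
            exact hpn.sublist (p.take_sublist _)
          have h2 : p.drop ts.length = [] := by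
            apply List.drop_eq_nil_of_le
            omega
          have h3 : p.take ts.length = p := by
            rw [← hplen, List.take_length]
          rw [h1, h2, h3]
          have h6 : ((List.permutations'Aux z ([] : List K)).map Tg).sum = 1 := by
            show Tg [z] + 0 = 1; simp
          rw [h6]
          ring
        rw [List.map_congr_left key]
        have hadd : (ts.permutations'.map
            (fun p => Tf (p.take (ts.length - 1)) * Tg (p.drop (ts.length - 1)) + Tf p)).sum
            = (ts.permutations'.map
                (fun p => Tf (p.take (ts.length - 1)) * Tg (p.drop (ts.length - 1)))).sum
              + (ts.permutations'.map Tf).sum := by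
          rw [show (fun p : List K => Tf (p.take (ts.length - 1)) * Tg (p.drop (ts.length - 1))
              + Tf p) = (fun p : List K => (fun q : List K => Tf (q.take (ts.length - 1))
                * Tg (q.drop (ts.length - 1))) p - (fun q : List K => -Tf q) p) by
            funext q; ring, helperSub]
          have : (ts.permutations'.map (fun q : List K => -Tf q)).sum
              = -(ts.permutations'.map Tf).sum := by
            rw [show (fun q : List K => -Tf q) = (fun q => (-1:K) * Tf q) by funext q; ring,
              helperMul]
            ring
          rw [this]
          ring
        rw [hadd, ih hts (ts.length - 1) (by omega), sumT ts hts]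
        have h4 : ts.length - (ts.length - 1) - 1 = 0 := by omega
        have h5 : ts.length + 1 - ts.length - 1 = 0 := by omega
        simp only [List.length_cons, h4, h5, pow_zero, one_mul]
        obtain ⟨k, hk⟩ : ∃ k, ts.length = k + 1 := ⟨ts.length - 1, by omega⟩
        rw [hk]
        simp only [Nat.add_sub_cancel, Nat.choose_succ_self_right]
        push_cast
        ring


/-- numerator omits index `i` -/
def U (i : ℕ) (l : List K) : K := (l.eraseIdx i).prod / den l

lemma helperAdd (M : List (List K)) (f g : List K → K) :
    (M.map (fun m => f m + g m)).sum = (M.map f).sum + (M.map g).sum := by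
  induction M with
  | nil => simp
  | cons a t ih => simp [ih]; ring

lemma U_cons (a b : K) (t : List K) (i : ℕ) :
    U (i+1) (a :: b :: t) = a / (a - b) * U i (b :: t) := by
  simp only [U, List.eraseIdx_cons_succ, List.prod_cons, den_cons₂]
  rw [div_mul_div_comm, mul_comm (a - b)]

lemma Udiff : ∀ l : List K, l.Nodup → ∀ i : ℕ, i + 1 < l.length →
    U i l - U (i+1) l = -(Tf (l.take (i+1)) * Tg (l.drop (i+1))) := by
  intro l
  induction l with
  | nil => intro _ i hi; simp at hi
  | cons a t ih =>
    intro h i hi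
    rcases t with _ | ⟨b, t'⟩
    · simp at hi
    have hab : a ≠ b := by simp at h; tauto
    have hab' : a - b ≠ 0 := sub_ne_zero.mpr hab
    rcases i with _ | i
    · -- i = 0
      show U 0 (a :: b :: t') - U 1 (a :: b :: t') = _
      have e0 : U 0 (a :: b :: t') = b * t'.prod / ((a-b) * den (b :: t')) := by
        simp [U, den_cons₂]
      have e1 : U 1 (a :: b :: t') = a * t'.prod / ((a-b) * den (b :: t')) := by
        simp [U, den_cons₂]
      rw [e0, e1, div_sub_div_same]
      have : b * t'.prod - a * t'.prod = -((a-b) * t'.prod) := by ring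
      rw [this, neg_div, mul_div_mul_left _ _ hab']
      simp [Tf_single, Tg]
    · -- i+1
      have ht : (b :: t').Nodup := (List.nodup_cons.mp h).2
      have hlen : i + 1 < (b :: t').length := by simpa using hi
      rw [U_cons, U_cons, ← mul_sub, ih ht i hlen]
      rcases i with _ | i <;>
      · simp only [List.take_succ_cons, List.drop_succ_cons]
        rw [Tf_cons₂]
        ring

lemma Vlem (l : List K) (hND : l.Nodup) : ∀ i : ℕ, i < l.length →
    ((l.permutations').map (U i)).sum
      = (-1 : K) ^ (l.length - 1 - i) * ((l.length - 1).choose i : K) := by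
  suffices H : ∀ k : ℕ, ∀ i : ℕ, i < l.length → l.length - 1 - i = k →
      ((l.permutations').map (U i)).sum
        = (-1 : K) ^ (l.length - 1 - i) * ((l.length - 1).choose i : K) by
    intro i hi; exact H _ i hi rfl
  intro k
  induction k with
  | zero =>
    intro i hi hk
    have hieq : i = l.length - 1 := by omega
    subst hieq
    have : ∀ m ∈ l.permutations', U (l.length - 1) m = Tf m := by
      intro m hm
      have hperm : List.Perm m l := List.mem_permutations'.mp hm
      have hmlen : m.length = l.length := hperm.length_eq
      unfold U Tf
      congr 1
      rw [List.eraseIdx_eq_take_drop_succ]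
      have h1 : l.length - 1 + 1 = l.length := by omega
      rw [h1, ← hmlen, List.drop_length, List.append_nil, List.dropLast_eq_take, hmlen]
    rw [List.map_congr_left this, sumT l hND]
    simp
  | succ k ihk =>
    intro i hi hk
    have hi1 : i + 1 < l.length := by omega
    have step : ∀ m ∈ l.permutations',
        U i m = U (i+1) m + (-(Tf (m.take (i+1)) * Tg (m.drop (i+1)))) := by
      intro m hm
      have hperm : List.Perm m l := List.mem_permutations'.mp hm
      have hmlen : m.length = l.length := hperm.length_eq
      have hmn : m.Nodup := hperm.nodup_iff.mpr hND
      have := Udiff m hmn i (by omega)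
      linear_combination this
    rw [List.map_congr_left step, helperAdd]
    have hneg : ((l.permutations').map
        (fun m => -(Tf (m.take (i+1)) * Tg (m.drop (i+1))))).sum
        = -(((l.permutations').map
            (fun m => Tf (m.take (i+1)) * Tg (m.drop (i+1)))).sum) := by
      rw [show (fun m : List K => -(Tf (m.take (i+1)) * Tg (m.drop (i+1))))
          = (fun m : List K => (-1:K) * (Tf (m.take (i+1)) * Tg (m.drop (i+1)))) by
        funext m; ring, helperMul]
      ring
    rw [hneg, Alem l hND (i+1) hi1, ihk (i+1) hi1 (by omega)]
    -- arithmetic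
    obtain ⟨L, hL⟩ : ∃ L, l.length = L + 1 := ⟨l.length - 1, by omega⟩
    rw [hL]
    simp only [Nat.add_sub_cancel]
    have e1 : L - (i+1) + 1 = L - i := by omega
    have e2 : L + 1 - (i + 1) - 1 = L - (i+1) := by omega
    rw [e2]
    have hch : ((L + 1).choose (i + 1) : K) = (L.choose i : K) + (L.choose (i+1) : K) := by
      rw [Nat.choose_succ_succ]
      push_cast
      ring
    rw [hch, ← e1, pow_succ]
    ring


lemma den_eq_prod_range : ∀ l : List K,
    den l = ∏ k ∈ Finset.range (l.length - 1), (l.getD k 0 - l.getD (k+1) 0) := by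
  intro l
  induction l with
  | nil => simp
  | cons a t ih =>
    rcases t with _ | ⟨b, t'⟩
    · simp
    · rw [den_cons₂, ih]
      have hlen : (a :: b :: t').length - 1 = ((b :: t').length - 1) + 1 := by
        simp
      rw [hlen, Finset.prod_range_succ']
      simp only [List.getD_cons_succ, List.getD_cons_zero]
      ring

lemma eraseIdx_map' {α β : Type*} (f : α → β) :
    ∀ (l : List α) (i : ℕ), (l.map f).eraseIdx i = (l.eraseIdx i).map f := by
  intro l
  induction l with
  | nil => intro i; simp
  | cons a t ih =>
    intro i
    rcases i with _ | i
    · simp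
    · simp only [List.map_cons, List.eraseIdx_cons_succ, ih]

lemma perm_sum_eq {n : ℕ} (G : List (Fin n) → K) :
    (∑ w : Equiv.Perm (Fin n), G ((List.finRange n).map w))
      = (((List.finRange n).permutations').map G).sum := by
  classical
  have hnd : ((List.finRange n).permutations').Nodup :=
    (List.permutations_perm_permutations' (List.finRange n)).nodup_iff.mp
      (List.nodup_permutations _ (List.nodup_finRange n))
  rw [← List.sum_toFinset G hnd]
  refine Finset.sum_bij (fun w _ => (List.finRange n).map w) ?_ ?_ ?_ ?_
  · intro w _
    rw [List.mem_toFinset, List.mem_permutations']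
    exact w.map_finRange_perm
  · intro w _ w' _ hww
    rw [List.map_inj_left] at hww
    ext j
    exact congrArg Fin.val (hww j (List.mem_finRange j))
  · intro b hb
    rw [List.mem_toFinset, List.mem_permutations'] at hb
    have hlen : b.length = n := by simpa using hb.length_eq
    have hbnd : b.Nodup := hb.nodup_iff.mpr (List.nodup_finRange n)
    have hinj : Function.Injective (fun j : Fin n => b.get (Fin.cast hlen.symm j)) := by
      intro j j' hjj
      have := List.nodup_iff_injective_get.mp hbnd hjj
      simpa [Fin.ext_iff] using this
    refine ⟨Equiv.ofBijective _ (Finite.injective_iff_bijective.mp hinj), Finset.mem_univ _, ?_⟩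
    apply List.ext_get (by simpa using hlen.symm)
    intro k h1 h2
    simp only [List.get_eq_getElem, List.getElem_map, Equiv.ofBijective_apply,
      List.getElem_finRange]
    rfl
  · intro w _
    rfl


lemma mem_eraseIdx_finRange {n : ℕ} (i j : Fin n) :
    j ∈ (List.finRange n).eraseIdx i.1 ↔ j ≠ i := by
  have hn : i.1 < (List.finRange n).length := by simpa using i.2
  constructor
  · rw [List.mem_iff_getElem]
    rintro ⟨k, hk, hkj⟩
    rw [List.getElem_eraseIdx] at hkj
    split_ifs at hkj with hki
    · have := congrArg Fin.val hkj
      simp only [List.getElem_finRange, Fin.coe_cast] at this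
      intro he
      subst he
      omega
    · have := congrArg Fin.val hkj
      simp only [List.getElem_finRange, Fin.coe_cast] at this
      intro he
      subst he
      omega
  · intro hne
    have hlen : ((List.finRange n).eraseIdx i.1).length = n - 1 := by
      rw [List.length_eraseIdx]
      simp [hn]
    have hji : j.1 ≠ i.1 := fun hh => hne (Fin.ext hh)
    rw [List.mem_iff_getElem]
    rcases Nat.lt_or_ge j.1 i.1 with hlt | hge
    · refine ⟨j.1, by omega, ?_⟩
      rw [List.getElem_eraseIdx, dif_pos hlt]
      apply Fin.ext
      simp [List.getElem_finRange]
    · have hgt : i.1 < j.1 := by omega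
      refine ⟨j.1 - 1, by omega, ?_⟩
      rw [List.getElem_eraseIdx, dif_neg (by omega)]
      apply Fin.ext
      simp only [List.getElem_finRange, Fin.coe_cast]
      omega

lemma prod_erase_eq_list {M : Type*} [CommMonoid M] {n : ℕ} (i : Fin n) (f : Fin n → M) :
    ∏ j ∈ Finset.univ.erase i, f j = (((List.finRange n).eraseIdx i.1).map f).prod := by
  classical
  have hnd : ((List.finRange n).eraseIdx i.1).Nodup :=
    (List.nodup_finRange n).sublist (List.eraseIdx_sublist _ _)
  rw [← List.prod_toFinset f hnd]
  congr 1
  ext j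
  simp [List.mem_toFinset, mem_eraseIdx_finRange, Finset.mem_erase]

end DSAux

/-- For `X_i = ∏_{j ≠ i} x_j`, one has `⟨X_i⟩_n = (-1)^{n-i} C(n-1, i-1)`
(here `i : Fin n` is the 0-based index, so `i.1 = i - 1` in 1-based terms). -/

theorem stmt6 (n : ℕ) (i : Fin n) :
    DS n (∏ j ∈ Finset.univ.erase i, X j) =
      algebraMap ℚ (FractionRing (MvPolynomial (Fin n) ℚ))
        ((-1 : ℚ) ^ (n - 1 - i.1) * ((n - 1).choose i.1)) := by
  classical
  set R := MvPolynomial (Fin n) ℚ with hR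
  set K := FractionRing R with hK
  set φ := algebraMap R K with hφ
  set x : Fin n → K := fun j => φ (X j) with hx
  have hxinj : Function.Injective x := fun a b hab =>
    MvPolynomial.X_injective (IsFractionRing.injective R K hab)
  set L : List K := (List.finRange n).map x with hL
  have hLlen : L.length = n := by simp [hL]
  have hLnd : L.Nodup := (List.nodup_finRange n).map hxinj
  have hterm : ∀ w : Equiv.Perm (Fin n),
      φ (rename ⇑w (∏ j ∈ Finset.univ.erase i, X j)) / φ (rename ⇑w (denomDS n))
        = DSAux.U i.1 (((List.finRange n).map ⇑w).map x) := by
    intro w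
    have hnum : φ (rename ⇑w (∏ j ∈ Finset.univ.erase i, X j))
        = (((((List.finRange n).map ⇑w)).map x).eraseIdx i.1).prod := by
      rw [map_prod, map_prod]
      have e1 : ∀ j ∈ Finset.univ.erase i, φ (rename ⇑w (X j)) = x (w j) := by
        intro j _
        rw [rename_X]
      rw [Finset.prod_congr rfl e1, DSAux.prod_erase_eq_list i (fun j => x (w j)),
        List.map_map, DSAux.eraseIdx_map']
      rfl
    have hden : φ (rename ⇑w (denomDS n))
        = DSAux.den (((List.finRange n).map ⇑w).map x) := by
      rw [DSAux.den_eq_prod_range]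
      have hlen2 : (((List.finRange n).map ⇑w).map x).length = n := by simp
      rw [hlen2]
      unfold denomDS
      rw [map_prod, map_prod]
      rw [← Fin.prod_univ_eq_prod_range
        (fun k => (((List.finRange n).map ⇑w).map x).getD k 0
          - (((List.finRange n).map ⇑w).map x).getD (k+1) 0) (n-1)]
      apply Finset.prod_congr rfl
      intro t _
      have ht1 : t.1 < n := by have := t.2; omega
      have ht2 : t.1 + 1 < n := by have := t.2; omega
      have hget : ∀ (k : ℕ) (hk : k < n),
          (((List.finRange n).map ⇑w).map x).getD k 0 = x (w ⟨k, hk⟩) := by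
        intro k hk
        rw [List.getD_eq_getElem _ _ (by simpa using hk)]
        simp only [List.getElem_map, List.getElem_finRange]
        congr 1
      rw [hget t.1 ht1, hget (t.1+1) ht2]
      rw [map_sub, map_sub, rename_X, rename_X]
    rw [hnum, hden]
    rfl
  unfold DS
  rw [Finset.sum_congr rfl (fun w _ => hterm w)]
  have hG : (∑ w : Equiv.Perm (Fin n),
        DSAux.U i.1 (((List.finRange n).map ⇑w).map x))
      = (((List.finRange n).permutations').map
          (fun l => DSAux.U i.1 (l.map x))).sum :=
    DSAux.perm_sum_eq (fun l => DSAux.U i.1 (l.map x))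
  rw [hG]
  have hmm : ((List.finRange n).permutations').map (fun l => DSAux.U i.1 (l.map x))
      = ((((List.finRange n).permutations').map (List.map x)).map (DSAux.U i.1)) := by
    rw [List.map_map]
    rfl
  rw [hmm, List.map_permutations' x (List.finRange n)]
  rw [DSAux.Vlem L hLnd i.1 (by rw [hLlen]; exact i.2), hLlen]
  rw [map_mul, map_pow, map_neg, map_one, map_natCast]
end

section
/- If c = (c_1,...,c_n) is a Catalan composition, i.e. Σ_{i≤k} c_i ≥ k for all k < n and Σ_i c_i = n−1, then the divided symmetrization of the Catalan monomial x^c equals 1: ⟨x_1^{c_1}···x_n^{c_n}⟩_n = 1. -/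
/-!
Write `y_i` for the image of `x_i` in the fraction field. Splitting a permutation by its first
value `p` turns the sum into sums over the remaining variables of the shape
`∑_w ∏ y_{w i}^{d i} / ((z - y_{w 0}) (y_{w 0} - y_{w 1}) ⋯)` with `z = y_p`. By induction such a
sum is `z^{∑ d} / ∏_i (z - y_i)` whenever every tail sum `∑_{i ≥ k} d i` is smaller than the
number `m - k` of its terms: splitting off the first value again, the inductive step is the
partial fraction expansion of `z^r / ∏_i (z - y_i)` for `r` below the number of factors. A Catalan
composition has such tails after its first entry, and what is left,
`∑_p y_p^{n-1} / ∏_{q ≠ p} (y_p - y_q)`, is the leading coefficient of the Lagrange interpolant of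
`X^{n-1}` on the nodes `y`, which is `1`.
-/

open MvPolynomial

open Finset Equiv

namespace Lagrange

variable {F : Type*} [Field F] {ι : Type*} [DecidableEq ι] {s : Finset ι} {v : ι → F}

theorem sum_pow_card_sub_one_div_prod_sub (hvs : Set.InjOn v s) (hs : s.Nonempty) :
    ∑ i ∈ s, v i ^ (#s - 1) / ∏ j ∈ s.erase i, (v i - v j) = 1 := by
  have hP : (Polynomial.X ^ (#s - 1) : Polynomial F).degree < #s := by
    rw [Polynomial.degree_X_pow]
    exact_mod_cast Nat.sub_lt hs.card_pos one_pos
  simpa using (coeff_eq_sum hvs hP).symm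

theorem sum_pow_div_mul_prod_sub (hvs : Set.InjOn v s) {x : F} (hx : ∀ i ∈ s, x ≠ v i) {r : ℕ}
    (hr : r < #s) :
    ∑ i ∈ s, v i ^ r / ((x - v i) * ∏ j ∈ s.erase i, (v i - v j)) =
      x ^ r / ∏ i ∈ s, (x - v i) := by
  have hP : (Polynomial.X ^ r : Polynomial F).degree < #s := by
    rw [Polynomial.degree_X_pow]
    exact_mod_cast hr
  have h := congrArg (Polynomial.eval x) (eq_interpolate hvs hP)
  rw [eval_interpolate_not_at_node _ hx, eval_nodal] at h
  simp only [Polynomial.eval_pow, Polynomial.eval_X] at h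
  rw [h, mul_div_cancel_left₀ _ (prod_ne_zero_iff.mpr fun i hi => sub_ne_zero.mpr (hx i hi))]
  refine sum_congr rfl fun i _ => ?_
  rw [nodalWeight, prod_inv_distrib]
  field_simp

end Lagrange

theorem Fin.prod_swap_zero_succ {M : Type*} [CommMonoid M] {m : ℕ} (f : Fin (m + 1) → M)
    (p : Fin (m + 1)) : ∏ i : Fin m, f (swap 0 p i.succ) = ∏ j ∈ univ.erase p, f j := by
  have h : univ.erase p = (univ.erase 0).map (swap 0 p).toEmbedding := by
    rw [map_erase, map_univ_equiv, coe_toEmbedding, swap_apply_left]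
  rw [h, prod_map, Fin.univ_succ, erase_cons, prod_map]
  rfl

theorem Function.Injective.tail_comp_swap {α : Type*} {m : ℕ} {y : Fin (m + 1) → α}
    (hy : Function.Injective y) (p : Fin (m + 1)) :
    Function.Injective (Fin.tail (y ∘ ⇑(Equiv.swap 0 p))) :=
  hy.comp ((Equiv.swap 0 p).injective.comp (Fin.succ_injective m))

theorem Function.Injective.ne_tail_comp_swap {α : Type*} {m : ℕ} {y : Fin (m + 1) → α}
    (hy : Function.Injective y) (p : Fin (m + 1)) (i : Fin m) :
    y p ≠ Fin.tail (y ∘ ⇑(Equiv.swap 0 p)) i := fun h =>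
  Fin.succ_ne_zero i <| by
    rw [← Equiv.swap_apply_self 0 p i.succ, ← hy h, Equiv.swap_apply_right]

theorem Equiv.Perm.sum_comp_eq_sum_sum_cons {α M : Type*} [AddCommMonoid M] {m : ℕ}
    (y : Fin (m + 1) → α) (G : (Fin (m + 1) → α) → M) :
    ∑ w : Perm (Fin (m + 1)), G (y ∘ w) =
      ∑ p, ∑ σ : Perm (Fin m), G (Fin.cons (y p) (Fin.tail (y ∘ ⇑(swap 0 p)) ∘ σ)) := by
  rw [← (Perm.decomposeFin).symm.sum_comp, Fintype.sum_prod_type]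
  refine sum_congr rfl fun p _ => sum_congr rfl fun σ _ => congrArg G ?_
  ext i
  cases i using Fin.cases <;> simp [Fin.tail]

section AdjDiffProd

variable {R : Type*} [CommRing R]

def adjDiffProd {m : ℕ} (g : Fin (m + 1) → R) : R :=
  ∏ i : Fin m, (g i.castSucc - g i.succ)

theorem adjDiffProd_cons {m : ℕ} (a : R) (g : Fin (m + 1) → R) :
    adjDiffProd (Fin.cons a g : Fin (m + 2) → R) = (a - g 0) * adjDiffProd g := by
  simp [adjDiffProd, Fin.prod_univ_succ]

theorem map_adjDiffProd {S G : Type*} [CommRing S] [FunLike G R S] [RingHomClass G R S] {m : ℕ}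
    (φ : G) (g : Fin (m + 1) → R) : φ (adjDiffProd g) = adjDiffProd (φ ∘ g) := by
  simp [adjDiffProd, map_prod]

end AdjDiffProd

section DividedSymmetrization

variable {F : Type*} [Field F]

theorem sum_perm_prod_pow_div_adjDiffProd_cons {m : ℕ} (y : Fin m → F)
    (hy : Function.Injective y) (z : F) (hz : ∀ i, z ≠ y i) (d : Fin m → ℕ)
    (hd : ∀ k : Fin m, ∑ i ≥ k, d i < m - k) :
    ∑ w : Perm (Fin m), (∏ i, y (w i) ^ d i) / adjDiffProd (Fin.cons z (y ∘ w)) =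
      z ^ (∑ i, d i) / ∏ i, (z - y i) := by
  induction m generalizing z with
  | zero => simp [adjDiffProd]
  | succ m ih =>
    refine (Perm.sum_comp_eq_sum_sum_cons y
      fun g => (∏ i, g i ^ d i) / adjDiffProd (Fin.cons z g)).trans ?_
    have hd' (k : Fin m) : ∑ i ≥ k, d i.succ < m - k := by
      simpa [Fin.sum_Ici_succ] using hd k.succ
    have inner (p : Fin (m + 1)) :
        ∑ σ : Perm (Fin m),
          (∏ i, (Fin.cons (y p) (Fin.tail (y ∘ ⇑(swap 0 p)) ∘ σ) : Fin (m + 1) → F) i ^ d i) /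
            adjDiffProd (Fin.cons z (Fin.cons (y p) (Fin.tail (y ∘ ⇑(swap 0 p)) ∘ σ))) =
          y p ^ (∑ i, d i) / ((z - y p) * ∏ j ∈ univ.erase p, (y p - y j)) := by
      set y' := Fin.tail (y ∘ ⇑(swap 0 p))
      calc _ = ∑ σ : Perm (Fin m), y p ^ d 0 / (z - y p) *
              ((∏ i, y' (σ i) ^ d i.succ) / adjDiffProd (Fin.cons (y p) (y' ∘ σ))) :=
            sum_congr rfl fun σ _ => by
              rw [adjDiffProd_cons, Fin.prod_univ_succ]
              simp only [Fin.cons_zero, Fin.cons_succ, Function.comp_apply]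
              exact mul_div_mul_comm _ _ _ _
        _ = y p ^ d 0 / (z - y p) * (y p ^ (∑ i : Fin m, d i.succ) / ∏ i, (y p - y' i)) := by
            rw [← mul_sum, ih y' (hy.tail_comp_swap p) (y p) (hy.ne_tail_comp_swap p) _ hd']
        _ = _ := by
            rw [Fin.sum_univ_succ, pow_add,
              show ∏ i, (y p - y' i) = ∏ j ∈ univ.erase p, (y p - y j)
                from Fin.prod_swap_zero_succ (fun j => y p - y j) p, mul_div_mul_comm]
    rw [sum_congr rfl fun p _ => inner p]
    exact Lagrange.sum_pow_div_mul_prod_sub hy.injOn (fun i _ => hz i) (by simpa using hd 0)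

theorem sum_perm_prod_pow_div_adjDiffProd {m : ℕ} (y : Fin (m + 1) → F)
    (hy : Function.Injective y) (c : Fin (m + 1) → ℕ) (hsum : ∑ i, c i = m)
    (htail : ∀ k : Fin m, ∑ i ≥ k, c i.succ < m - k) :
    ∑ w : Perm (Fin (m + 1)), (∏ i, y (w i) ^ c i) / adjDiffProd (y ∘ w) = 1 := by
  refine (Perm.sum_comp_eq_sum_sum_cons y fun g => (∏ i, g i ^ c i) / adjDiffProd g).trans ?_
  have inner (p : Fin (m + 1)) :
      ∑ σ : Perm (Fin m),
        (∏ i, (Fin.cons (y p) (Fin.tail (y ∘ ⇑(swap 0 p)) ∘ σ) : Fin (m + 1) → F) i ^ c i) /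
          adjDiffProd (Fin.cons (y p) (Fin.tail (y ∘ ⇑(swap 0 p)) ∘ σ) : Fin (m + 1) → F) =
        y p ^ m / ∏ j ∈ univ.erase p, (y p - y j) := by
    set y' := Fin.tail (y ∘ ⇑(swap 0 p))
    calc _ = ∑ σ : Perm (Fin m), y p ^ c 0 *
            ((∏ i, y' (σ i) ^ c i.succ) / adjDiffProd (Fin.cons (y p) (y' ∘ σ))) :=
          sum_congr rfl fun σ _ => by
            rw [Fin.prod_univ_succ]
            simp only [Fin.cons_zero, Fin.cons_succ, Function.comp_apply]
            exact mul_div_assoc _ _ _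
      _ = y p ^ c 0 * (y p ^ (∑ i : Fin m, c i.succ) / ∏ i, (y p - y' i)) := by
          rw [← mul_sum, sum_perm_prod_pow_div_adjDiffProd_cons y' (hy.tail_comp_swap p) (y p)
            (hy.ne_tail_comp_swap p) _ htail]
      _ = _ := by
          rw [← mul_div_assoc, ← pow_add, ← Fin.sum_univ_succ, hsum,
            show ∏ i, (y p - y' i) = ∏ j ∈ univ.erase p, (y p - y j)
              from Fin.prod_swap_zero_succ (fun j => y p - y j) p]
  rw [sum_congr rfl fun p _ => inner p]
  simpa using Lagrange.sum_pow_card_sub_one_div_prod_sub hy.injOn univ_nonempty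

end DividedSymmetrization

theorem sum_Ici_succ_lt_of_catalan {m : ℕ} (c : Fin (m + 1) → ℕ)
    (hcat : ∀ k, 1 ≤ k → k < m + 1 →
      k ≤ ∑ i ∈ univ.filter (fun i : Fin (m + 1) => i.1 < k), c i)
    (hsum : ∑ i, c i = m) (k : Fin m) : ∑ i ≥ k, c i.succ < m - k := by
  have hhead := hcat (k + 1) (by omega) (by omega)
  have hsplit := sum_filter_add_sum_filter_not univ (fun i : Fin (m + 1) => i.1 < k + 1) c
  have htail : ∑ i ∈ univ.filter (fun i : Fin (m + 1) => ¬ i.1 < k + 1), c i =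
      ∑ i ≥ k, c i.succ := by
    rw [← Fin.sum_Ici_succ]
    congr 1
    ext i
    simp [Fin.le_def]
  omega

/-- If `c` is a Catalan composition (partial sums `≥ k`, total `n-1`), then the
divided symmetrization of the Catalan monomial `x^c` equals `1`. -/
theorem stmt10 (n : ℕ) (c : Fin n → ℕ)
    (hcat : ∀ k, 1 ≤ k → k < n →
      k ≤ ∑ i ∈ Finset.univ.filter (fun i : Fin n => i.1 < k), c i)
    (hsum : ∑ i, c i = n - 1) :
    DS n (∏ i, X i ^ c i) = 1 := by
  cases n with
  | zero => simp [DS, denomDS]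
  | succ m =>
    let A := MvPolynomial (Fin (m + 1)) ℚ
    let K := FractionRing A
    let y : Fin (m + 1) → K := fun i => algebraMap A K (X i)
    have hy : Function.Injective y := (IsFractionRing.injective A K).comp X_injective
    have hterm (w : Perm (Fin (m + 1))) :
        algebraMap A K (rename w (∏ i, X i ^ c i)) / algebraMap A K (rename w (denomDS (m + 1))) =
          (∏ i, y (w i) ^ c i) / adjDiffProd (y ∘ w) := by
      have hX : ⇑(algebraMap A K) ∘ ⇑(rename w) ∘ X = y ∘ w := by
        ext i
        simp [y]
      rw [show denomDS (m + 1) = adjDiffProd (X : Fin (m + 1) → A) from rfl]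
      simp only [map_adjDiffProd, map_prod, map_pow, rename_X, hX]
      rfl
    rw [DS, sum_congr rfl fun w _ => hterm w]
    exact sum_perm_prod_pow_div_adjDiffProd y hy c hsum (sum_Ici_succ_lt_of_catalan c hcat hsum)
end

section
/- If c = (c_1,...,c_n) is a weak composition of n−1 with Σ_{i≤k} c_i < k for all 1 ≤ k ≤ n−1 (an anti-Catalan composition), then ⟨x_1^{c_1}···x_n^{c_n}⟩_n = (−1)^{n−1}. -/
open Finset Polynomial

variable {K : Type*} [Field K]

lemma lag {n : ℕ} (x : Fin n → K) (hx : Function.Injective x)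
    (M : Finset (Fin n)) (hM : M.Nonempty) (e : ℕ) (he : e ≤ M.card - 1) :
    ∑ z ∈ M, x z ^ e / ∏ v ∈ M.erase z, (x z - x v) =
      if e = M.card - 1 then 1 else 0 := by
  classical
  have hcard : 1 ≤ M.card := hM.card_pos
  set q : Fin n → K[X] := fun z => ∏ v ∈ M.erase z, (X - C (x v)) with hq
  have hqmonic : ∀ z, (q z).Monic := fun z =>
    monic_prod_of_monic _ _ (fun v _ => monic_X_sub_C _)
  have hqdeg : ∀ z ∈ M, (q z).natDegree = M.card - 1 := by
    intro z hz
    rw [hq]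
    rw [natDegree_prod_of_monic _ _ (fun v _ => monic_X_sub_C _)]
    simp [natDegree_X_sub_C, card_erase_of_mem hz]
  have hprodne : ∀ z ∈ M, (∏ v ∈ M.erase z, (x z - x v)) ≠ 0 := by
    intro z hz
    rw [Finset.prod_ne_zero_iff]
    intro v hv
    exact sub_ne_zero.mpr (fun h => (mem_erase.mp hv).1 ((hx h).symm))
  set p : K[X] := ∑ z ∈ M, C (x z ^ e / ∏ v ∈ M.erase z, (x z - x v)) * q z with hp
  have hdegq : ∀ z ∈ M, (q z).degree = ((M.card - 1 : ℕ) : WithBot ℕ) := by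
    intro z hz
    rw [degree_eq_natDegree (hqmonic z).ne_zero, hqdeg z hz]
  have hpeq : p = X ^ e := by
    apply eq_of_degrees_lt_of_eval_index_eq (v := x) M (Set.injOn_of_injective hx)
    · apply lt_of_le_of_lt (degree_sum_le _ _)
      rw [Finset.sup_lt_iff (WithBot.bot_lt_coe _)]
      intro z hz
      apply lt_of_le_of_lt (degree_mul_le _ _)
      calc (C (x z ^ e / ∏ v ∈ M.erase z, (x z - x v))).degree + (q z).degree
          ≤ 0 + (q z).degree := by gcongr; exact degree_C_le
        _ = ((M.card - 1 : ℕ) : WithBot ℕ) := by rw [zero_add, hdegq z hz]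
        _ < (M.card : WithBot ℕ) := by exact_mod_cast Nat.sub_lt hcard Nat.zero_lt_one
    · rw [degree_X_pow]
      exact_mod_cast Nat.lt_of_le_of_lt he (Nat.sub_lt hcard Nat.zero_lt_one)
    · intro u hu
      rw [hp, eval_finset_sum]
      rw [Finset.sum_eq_single u]
      · rw [eval_mul, eval_C, hq]
        simp only [eval_prod, eval_sub, eval_X, eval_C]
        rw [div_mul_cancel₀ _ (hprodne u hu)]
        simp
      · intro z hz hzu
        rw [eval_mul, hq]
        simp only [eval_prod, eval_sub, eval_X, eval_C]
        have hz0 : ∏ v ∈ M.erase z, (x u - x v) = 0 :=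
          Finset.prod_eq_zero (mem_erase.mpr ⟨Ne.symm hzu, hu⟩) (sub_self (x u))
        rw [hz0, mul_zero]
      · intro h; exact absurd hu h
  have hcoeff := congrArg (fun r : K[X] => r.coeff (M.card - 1)) hpeq
  simp only [hp, finset_sum_coeff, coeff_C_mul, coeff_X_pow] at hcoeff
  have hstep : ∑ z ∈ M, (x z ^ e / ∏ v ∈ M.erase z, (x z - x v)) * (q z).coeff (M.card - 1)
      = ∑ z ∈ M, x z ^ e / ∏ v ∈ M.erase z, (x z - x v) :=
    Finset.sum_congr rfl (fun z hz => by
      rw [← hqdeg z hz, (hqmonic z).coeff_natDegree, mul_one])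
  rw [hstep] at hcoeff
  rw [hcoeff]
  simp [eq_comm]

variable {K : Type*} [Field K]

/-- chain sum: `CS x b y S` = sum over orderings `(u₁,…,u_m)` of `S` of
`∏ x_{uᵢ}^{bᵢ} / ((y - x_{u₁})(x_{u₁} - x_{u₂})⋯)`. -/
noncomputable def CS {n : ℕ} (x : Fin n → K) : List ℕ → K → Finset (Fin n) → K
  | [], _, _ => 1
  | e :: b, y, S => ∑ u ∈ S, x u ^ e / (y - x u) * CS x b (x u) (S.erase u)

lemma CS_nil {n : ℕ} (x : Fin n → K) (y : K) (S : Finset (Fin n)) : CS x [] y S = 1 := rfl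

lemma CS_cons {n : ℕ} (x : Fin n → K) (e : ℕ) (b : List ℕ) (y : K) (S : Finset (Fin n)) :
    CS x (e :: b) y S = ∑ u ∈ S, x u ^ e / (y - x u) * CS x b (x u) (S.erase u) := rfl

lemma core {n : ℕ} (x : Fin n → K) (hx : Function.Injective x)
    (P : Finset (Fin n)) (hP : P.Nonempty) (u : Fin n) (hu : u ∉ P)
    (e : ℕ) (he : e ≤ P.card - 1) :
    ∑ z ∈ P, x z ^ e / ((∏ p ∈ P.erase z, (x z - x p)) * (x z - x u)) =
      - (x u ^ e / ∏ p ∈ P, (x u - x p)) := by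
  classical
  have hM := lag x hx (insert u P) ⟨u, mem_insert_self u P⟩ e
    (by rw [card_insert_of_notMem hu]; omega)
  rw [if_neg (by rw [card_insert_of_notMem hu]; have := hP.card_pos; omega)] at hM
  rw [Finset.sum_insert hu, Finset.erase_insert hu] at hM
  have hcongr : ∀ z ∈ P, x z ^ e / ∏ v ∈ (insert u P).erase z, (x z - x v)
      = x z ^ e / ((∏ p ∈ P.erase z, (x z - x p)) * (x z - x u)) := by
    intro z hz
    rw [Finset.erase_insert_of_ne (fun h : u = z => hu (h ▸ hz)),
      Finset.prod_insert (fun h => hu (Finset.mem_of_mem_erase h)), mul_comm]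
  rw [Finset.sum_congr rfl hcongr] at hM
  exact eq_neg_of_add_eq_zero_right hM

variable {K : Type*} [Field K]

def LL (cc : ℕ → ℕ) (n k : ℕ) : List ℕ := (List.range (n - k)).map (fun j => cc (k + j))

lemma LL_succ (cc : ℕ → ℕ) {n k : ℕ} (hk : k < n) :
    LL cc n k = cc k :: LL cc n (k + 1) := by
  unfold LL
  have h : n - k = (n - (k+1)) + 1 := by omega
  rw [h, List.range_succ_eq_map, List.map_cons, List.map_map]
  simp only [Nat.add_zero]
  congr 1
  apply List.map_congr_left
  intro j _
  simp only [Function.comp]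
  congr 1
  omega

lemma set_swap {n : ℕ} {z u : Fin n} {P : Finset (Fin n)} (hzu : z ≠ u) (hzP : z ∉ P)
    (huP : u ∉ P) :
    ((Finset.univ.erase z) \ P).erase u = (Finset.univ.erase u) \ (insert z P) := by
  ext w
  simp only [mem_erase, mem_sdiff, mem_insert, mem_univ, and_true]
  constructor
  · rintro ⟨hwu, hwz, hwP⟩
    exact ⟨hwu, fun h => h.elim (fun h' => hwz h') hwP⟩
  · rintro ⟨hwu, hw⟩
    exact ⟨hwu, fun h => hw (Or.inl h), fun h => hw (Or.inr h)⟩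

noncomputable def AA {n : ℕ} (x : Fin n → K) (cc : ℕ → ℕ) (t : ℕ) : K :=
  (-1) ^ t * ∑ z : Fin n, ∑ P ∈ (Finset.univ.erase z).powersetCard t,
    x z ^ (∑ i ∈ Finset.range (t + 1), cc i) / (∏ p ∈ P, (x z - x p)) *
      CS x (LL cc n (t + 1)) (x z) ((Finset.univ.erase z) \ P)

lemma AA_step {n : ℕ} (x : Fin n → K) (hx : Function.Injective x) (cc : ℕ → ℕ)
    (t : ℕ) (ht : t + 1 < n) (hanti : ∑ i ∈ Finset.range (t + 1), cc i ≤ t) :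
    AA x cc t = AA x cc (t + 1) := by
  classical
  set st := ∑ i ∈ Finset.range (t + 1), cc i with hst
  set G : Fin n → Finset (Fin n) → Fin n → K := fun z P u =>
    x z ^ st / ((∏ p ∈ P, (x z - x p)) * (x z - x u)) *
      (x u ^ cc (t + 1) * CS x (LL cc n (t + 2)) (x u) ((Finset.univ.erase u) \ (insert z P)))
    with hG
  have hL : AA x cc t = (-1) ^ t * ∑ z : Fin n,
      ∑ P ∈ (Finset.univ.erase z).powersetCard t, ∑ u ∈ (Finset.univ.erase z) \ P,
        G z P u := by
    unfold AA
    congr 1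
    apply Finset.sum_congr rfl
    intro z _
    apply Finset.sum_congr rfl
    intro P hP
    rw [LL_succ cc (by omega : t + 1 < n), CS_cons, Finset.mul_sum]
    apply Finset.sum_congr rfl
    intro u hu
    have hzP : z ∉ P := by
      have := Finset.mem_powersetCard.mp hP
      intro h
      exact (Finset.notMem_erase z Finset.univ) (this.1 h)
    have huP : u ∉ P := (Finset.mem_sdiff.mp hu).2
    have huz : u ≠ z := Finset.ne_of_mem_erase (Finset.mem_sdiff.mp hu).1
    rw [hG]
    dsimp only
    rw [set_swap (Ne.symm huz) hzP huP, ← hst,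
      show t + 1 + 1 = t + 2 from rfl]
    simp only [div_eq_mul_inv, mul_inv]
    ring
  have hR : AA x cc (t + 1) = (-1) ^ t * ∑ u : Fin n,
      ∑ Q ∈ (Finset.univ.erase u).powersetCard (t + 1), ∑ z ∈ Q,
        G z (Q.erase z) u := by
    unfold AA
    rw [show ((-1 : K) ^ (t + 1)) = (-1) ^ t * (-1) by ring, mul_assoc]
    congr 1
    rw [Finset.mul_sum]
    apply Finset.sum_congr rfl
    intro u _
    rw [Finset.mul_sum]
    apply Finset.sum_congr rfl
    intro Q hQ
    have hQsub := (Finset.mem_powersetCard.mp hQ).1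
    have hQcard := (Finset.mem_powersetCard.mp hQ).2
    have huQ : u ∉ Q := fun h => (Finset.notMem_erase u Finset.univ) (hQsub h)
    have hQne : Q.Nonempty := Finset.card_pos.mp (by omega)
    have hcore := core x hx Q hQne u huQ st (by omega)
    have hfix : ∀ z ∈ Q, G z (Q.erase z) u =
        x z ^ st / ((∏ p ∈ Q.erase z, (x z - x p)) * (x z - x u)) *
          (x u ^ cc (t + 1) * CS x (LL cc n (t + 2)) (x u) ((Finset.univ.erase u) \ Q)) := by
      intro z hz
      rw [hG]
      dsimp only
      rw [Finset.insert_erase hz]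
    rw [Finset.sum_congr rfl hfix, ← Finset.sum_mul, hcore,
      show t + 1 + 1 = t + 2 from rfl, Finset.sum_range_succ, pow_add, ← hst]
    ring
  rw [hL, hR]
  congr 1
  have h1 : (∑ z : Fin n, ∑ P ∈ (Finset.univ.erase z).powersetCard t,
      ∑ u ∈ (Finset.univ.erase z) \ P, G z P u)
      = ∑ p ∈ (Finset.univ.sigma fun z : Fin n =>
          ((Finset.univ.erase z).powersetCard t).sigma fun P => (Finset.univ.erase z) \ P),
        G p.1 p.2.1 p.2.2 := by
    rw [Finset.sum_sigma]
    exact Finset.sum_congr rfl (fun z _ => by rw [Finset.sum_sigma])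
  have h2 : (∑ u : Fin n, ∑ Q ∈ (Finset.univ.erase u).powersetCard (t + 1),
      ∑ z ∈ Q, G z (Q.erase z) u)
      = ∑ q ∈ (Finset.univ.sigma fun u : Fin n =>
          ((Finset.univ.erase u).powersetCard (t + 1)).sigma fun Q => Q),
        G q.2.2 (q.2.1.erase q.2.2) q.1 := by
    rw [Finset.sum_sigma]
    exact Finset.sum_congr rfl (fun u _ => by rw [Finset.sum_sigma])
  rw [h1, h2]
  apply Finset.sum_nbij' (i := fun p : (_ : Fin n) × (_ : Finset (Fin n)) × Fin n =>
      (⟨p.2.2, ⟨insert p.1 p.2.1, p.1⟩⟩ : (_ : Fin n) × (_ : Finset (Fin n)) × Fin n))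
    (j := fun q : (_ : Fin n) × (_ : Finset (Fin n)) × Fin n =>
      (⟨q.2.2, ⟨q.2.1.erase q.2.2, q.1⟩⟩ : (_ : Fin n) × (_ : Finset (Fin n)) × Fin n))
  · rintro ⟨z, P, u⟩ hp
    simp only [Finset.mem_sigma, Finset.mem_powersetCard, Finset.mem_sdiff, Finset.mem_univ,
      true_and] at hp ⊢
    obtain ⟨⟨hPsub, hPcard⟩, hu, huP⟩ := hp
    have hzP : z ∉ P := fun h => Finset.notMem_erase z _ (hPsub h)
    have huz : u ≠ z := Finset.ne_of_mem_erase hu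
    refine ⟨⟨?_, ?_⟩, Finset.mem_insert_self _ _⟩
    · intro w hw
      rcases Finset.mem_insert.mp hw with rfl | hwP
      · exact Finset.mem_erase.mpr ⟨Ne.symm huz, Finset.mem_univ _⟩
      · exact Finset.mem_erase.mpr ⟨fun h => huP (h ▸ hwP), Finset.mem_univ _⟩
    · rw [Finset.card_insert_of_notMem hzP, hPcard]
  · rintro ⟨u, Q, z⟩ hq
    simp only [Finset.mem_sigma, Finset.mem_powersetCard, Finset.mem_sdiff, Finset.mem_univ,
      true_and] at hq ⊢
    obtain ⟨⟨hQsub, hQcard⟩, hz⟩ := hq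
    have hzu : z ≠ u := Finset.ne_of_mem_erase (hQsub hz)
    have huQ : u ∉ Q := fun h => Finset.notMem_erase u _ (hQsub h)
    refine ⟨⟨?_, ?_⟩, ?_, ?_⟩
    · intro w hw
      exact Finset.mem_erase.mpr ⟨(Finset.mem_erase.mp hw).1, Finset.mem_univ _⟩
    · rw [Finset.card_erase_of_mem hz, hQcard]; omega
    · exact Finset.mem_erase.mpr ⟨Ne.symm hzu, Finset.mem_univ _⟩
    · exact fun h => huQ (Finset.mem_of_mem_erase h)
  · rintro ⟨z, P, u⟩ hp
    simp only [Finset.mem_sigma, Finset.mem_powersetCard, Finset.mem_sdiff, Finset.mem_univ,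
      true_and] at hp
    obtain ⟨⟨hPsub, hPcard⟩, hu, huP⟩ := hp
    have hzP : z ∉ P := fun h => Finset.notMem_erase z _ (hPsub h)
    simp [Finset.erase_insert hzP]
  · rintro ⟨u, Q, z⟩ hq
    simp only [Finset.mem_sigma, Finset.mem_powersetCard, Finset.mem_sdiff, Finset.mem_univ,
      true_and] at hq
    obtain ⟨⟨hQsub, hQcard⟩, hz⟩ := hq
    simp [Finset.insert_erase hz]
  · rintro ⟨z, P, u⟩ hp
    simp only [Finset.mem_sigma, Finset.mem_powersetCard, Finset.mem_sdiff, Finset.mem_univ,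
      true_and] at hp
    obtain ⟨⟨hPsub, hPcard⟩, hu, huP⟩ := hp
    have hzP : z ∉ P := fun h => Finset.notMem_erase z _ (hPsub h)
    simp only []
    rw [Finset.erase_insert hzP]

lemma AA_last {n : ℕ} (x : Fin n → K) (hx : Function.Injective x) (cc : ℕ → ℕ) (hn : 1 ≤ n)
    (hsum : ∑ i ∈ Finset.range n, cc i = n - 1) :
    AA x cc (n - 1) = (-1) ^ (n - 1) := by
  classical
  unfold AA
  have h1 : n - 1 + 1 = n := by omega
  rw [h1, hsum]
  have hps : ∀ z : Fin n, (Finset.univ.erase z).powersetCard (n - 1) = {Finset.univ.erase z} :=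
    fun z => by
      rw [show n - 1 = (Finset.univ.erase z).card by
        rw [Finset.card_erase_of_mem (Finset.mem_univ z), Finset.card_univ, Fintype.card_fin],
        Finset.powersetCard_self]
  have hLL : LL cc n n = [] := by unfold LL; simp
  have hstep : ∀ z : Fin n, (∑ P ∈ (Finset.univ.erase z).powersetCard (n - 1),
      x z ^ (n - 1) / (∏ p ∈ P, (x z - x p)) *
        CS x (LL cc n n) (x z) ((Finset.univ.erase z) \ P))
      = x z ^ (n - 1) / ∏ p ∈ Finset.univ.erase z, (x z - x p) := by
    intro z
    rw [hps z, Finset.sum_singleton, hLL, CS_nil, mul_one]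
  rw [Finset.sum_congr rfl (fun z _ => hstep z)]
  have hne : (Finset.univ : Finset (Fin n)).Nonempty := ⟨⟨0, by omega⟩, Finset.mem_univ _⟩
  have hcard : (Finset.univ : Finset (Fin n)).card = n := by
    rw [Finset.card_univ, Fintype.card_fin]
  have hlag := lag x hx Finset.univ hne (n - 1) (by rw [hcard])
  rw [if_pos (by rw [hcard])] at hlag
  rw [show (∑ z : Fin n, x z ^ (n - 1) / ∏ p ∈ Finset.univ.erase z, (x z - x p)) = 1 from hlag,
    mul_one]

def posf {n : ℕ} (hn : 0 < n) (i : ℕ) : Fin n := if h : i < n then ⟨i, h⟩ else ⟨0, hn⟩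

lemma posf_lt {n : ℕ} (hn : 0 < n) {i : ℕ} (h : i < n) : (posf hn i).1 = i := by
  unfold posf; rw [dif_pos h]

lemma posf_inj {n : ℕ} (hn : 0 < n) {i j : ℕ} (hi : i < n) (hj : j < n)
    (h : posf hn i = posf hn j) : i = j := by
  have := congrArg Fin.val h
  rwa [posf_lt hn hi, posf_lt hn hj] at this

def EE {n : ℕ} (hn : 0 < n) (k : ℕ) (g : Equiv.Perm (Fin n)) : Finset (Equiv.Perm (Fin n)) :=
  Finset.univ.filter (fun w => ∀ i < k, w (posf hn i) = g (posf hn i))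

lemma bridge {n : ℕ} (hn : 0 < n) (x : Fin n → K) (cc : ℕ → ℕ) :
    ∀ (d k : ℕ), 1 ≤ k → k + d = n → ∀ g : Equiv.Perm (Fin n),
    ∑ w ∈ EE hn k g, (∏ i ∈ Finset.range n, x (w (posf hn i)) ^ cc i) /
        (∏ i ∈ Finset.range (n - 1), (x (w (posf hn i)) - x (w (posf hn (i + 1)))))
      = (∏ i ∈ Finset.range k, x (g (posf hn i)) ^ cc i) /
          (∏ i ∈ Finset.range (k - 1), (x (g (posf hn i)) - x (g (posf hn (i + 1)))))
        * CS x (LL cc n k) (x (g (posf hn (k - 1))))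
            (Finset.univ \ (Finset.range k).image (fun i => g (posf hn i))) := by
  intro d
  induction d with
  | zero =>
    intro k hk hkn g
    have hkn' : k = n := by omega
    subst hkn'
    have hEE : EE hn k g = {g} := by
      ext w
      simp only [EE, Finset.mem_filter, Finset.mem_univ, true_and, Finset.mem_singleton]
      constructor
      · intro h
        apply Equiv.ext
        intro j
        have hj := h j.1 j.isLt
        have : posf hn j.1 = j := by
          apply Fin.ext
          rw [posf_lt hn j.isLt]
        rwa [this] at hj
      · rintro rfl
        exact fun i _ => rfl
    rw [hEE, Finset.sum_singleton]
    have hLL : LL cc k k = [] := by unfold LL; simp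
    rw [hLL, CS_nil, mul_one]
  | succ d ih =>
    intro k hk hkn g
    have hklt : k < n := by omega
    rw [LL_succ cc hklt, CS_cons, Finset.mul_sum]
    rw [← Finset.sum_fiberwise_of_maps_to (g := fun w : Equiv.Perm (Fin n) => w (posf hn k))
      (fun w _ => Finset.mem_univ _)]
    set T := (Finset.range k).image (fun i => g (posf hn i)) with hT
    have hzero : ∀ u ∈ (Finset.univ : Finset (Fin n)), u ∉ Finset.univ \ T →
        (∑ w ∈ (EE hn k g).filter (fun w => w (posf hn k) = u),
          (∏ i ∈ Finset.range n, x (w (posf hn i)) ^ cc i) /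
            (∏ i ∈ Finset.range (n - 1), (x (w (posf hn i)) - x (w (posf hn (i + 1)))))) = 0 := by
      intro u _ hu
      have huT : u ∈ T := by
        by_contra h
        exact hu (Finset.mem_sdiff.mpr ⟨Finset.mem_univ u, h⟩)
      obtain ⟨i0, hi0, hgi0⟩ := Finset.mem_image.mp huT
      have hi0k : i0 < k := Finset.mem_range.mp hi0
      have : (EE hn k g).filter (fun w => w (posf hn k) = u) = ∅ := by
        apply Finset.eq_empty_of_forall_notMem
        intro w hw
        rw [Finset.mem_filter] at hw
        obtain ⟨hwE, hwk⟩ := hw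
        rw [EE, Finset.mem_filter] at hwE
        have h1 : w (posf hn i0) = u := (hwE.2 i0 hi0k).trans hgi0
        have h2 : posf hn i0 = posf hn k := w.injective (h1.trans hwk.symm)
        exact absurd (posf_inj hn (by omega) hklt h2) (by omega)
      rw [this, Finset.sum_empty]
    rw [← Finset.sum_subset (Finset.subset_univ (Finset.univ \ T)) hzero]
    apply Finset.sum_congr rfl
    intro u huS
    have huT : u ∉ T := (Finset.mem_sdiff.mp huS).2
    set g' := g * Equiv.swap (posf hn k) (g.symm u) with hg'
    have hglt : ∀ i < k, g' (posf hn i) = g (posf hn i) := by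
      intro i hik
      rw [hg']
      simp only [Equiv.Perm.mul_apply]
      rw [Equiv.swap_apply_of_ne_of_ne]
      · intro h
        exact absurd (posf_inj hn (by omega) hklt h) (by omega)
      · intro h
        apply huT
        rw [hT]
        exact Finset.mem_image.mpr ⟨i, Finset.mem_range.mpr hik, by simp [h]⟩
    have hgk : g' (posf hn k) = u := by
      rw [hg']
      simp only [Equiv.Perm.mul_apply, Equiv.swap_apply_left, Equiv.apply_symm_apply]
    have hfib : (EE hn k g).filter (fun w => w (posf hn k) = u) = EE hn (k + 1) g' := by
      ext w
      simp only [EE, Finset.mem_filter, Finset.mem_univ, true_and]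
      constructor
      · rintro ⟨hall, hwk⟩ i hik
        rcases Nat.lt_or_ge i k with h | h
        · rw [hglt i h]; exact hall i h
        · have : i = k := by omega
          subst this
          rw [hgk]; exact hwk
      · intro hall
        exact ⟨fun i hik => (hall i (by omega)).trans (hglt i hik),
          (hall k (by omega)).trans hgk⟩
    rw [hfib, ih (k + 1) (by omega) (by omega) g']
    -- now simplify the IH right-hand side
    have E1 : ∏ i ∈ Finset.range (k + 1), x (g' (posf hn i)) ^ cc i
        = (∏ i ∈ Finset.range k, x (g (posf hn i)) ^ cc i) * x u ^ cc k := by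
      rw [Finset.prod_range_succ, hgk]
      congr 1
      exact Finset.prod_congr rfl (fun i hi => by
        rw [hglt i (Finset.mem_range.mp hi)])
    have E2 : ∏ i ∈ Finset.range (k + 1 - 1), (x (g' (posf hn i)) - x (g' (posf hn (i + 1))))
        = (∏ i ∈ Finset.range (k - 1), (x (g (posf hn i)) - x (g (posf hn (i + 1)))))
          * (x (g (posf hn (k - 1))) - x u) := by
      rw [show k + 1 - 1 = k from rfl]
      have hsplit : ∏ i ∈ Finset.range k, (x (g' (posf hn i)) - x (g' (posf hn (i + 1))))
          = (∏ i ∈ Finset.range (k - 1), (x (g' (posf hn i)) - x (g' (posf hn (i + 1)))))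
            * (x (g' (posf hn (k - 1))) - x (g' (posf hn (k - 1 + 1)))) := by
        rw [← Finset.prod_range_succ, Nat.sub_add_cancel hk]
      rw [hsplit, Nat.sub_add_cancel hk, hgk, hglt (k - 1) (by omega)]
      congr 1
      exact Finset.prod_congr rfl (fun i hi => by
        have hik : i < k - 1 := Finset.mem_range.mp hi
        rw [hglt i (by omega), hglt (i + 1) (by omega)])
    have E3 : x (g' (posf hn (k + 1 - 1))) = x u := by
      rw [show k + 1 - 1 = k from rfl, hgk]
    have E4 : Finset.univ \ (Finset.range (k + 1)).image (fun i => g' (posf hn i))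
        = (Finset.univ \ T).erase u := by
      rw [Finset.range_add_one, Finset.image_insert, hgk]
      have : (Finset.range k).image (fun i => g' (posf hn i)) = T := by
        rw [hT]
        exact Finset.image_congr (fun i hi => hglt i (Finset.mem_range.mp hi))
      rw [this]
      ext w
      simp only [Finset.mem_sdiff, Finset.mem_insert, Finset.mem_erase, Finset.mem_univ, true_and]
      tauto
    rw [E1, E2, E3, E4]
    simp only [div_eq_mul_inv, mul_inv]
    ring

lemma perm_to_AA0 {n : ℕ} (hn : 0 < n) (x : Fin n → K) (cc : ℕ → ℕ) :
    ∑ w : Equiv.Perm (Fin n), (∏ i ∈ Finset.range n, x (w (posf hn i)) ^ cc i) /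
        (∏ i ∈ Finset.range (n - 1), (x (w (posf hn i)) - x (w (posf hn (i + 1)))))
      = AA x cc 0 := by
  classical
  rw [← Finset.sum_fiberwise_of_maps_to (g := fun w : Equiv.Perm (Fin n) => w (posf hn 0))
    (fun w _ => Finset.mem_univ _)]
  unfold AA
  rw [pow_zero, one_mul]
  apply Finset.sum_congr rfl
  intro z _
  have hfib : Finset.univ.filter (fun w : Equiv.Perm (Fin n) => w (posf hn 0) = z)
      = EE hn 1 (Equiv.swap (posf hn 0) z) := by
    ext w
    simp only [EE, Finset.mem_filter, Finset.mem_univ, true_and]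
    constructor
    · intro h i hi
      have : i = 0 := by omega
      subst this
      rw [h, Equiv.swap_apply_left]
    · intro h
      rw [h 0 (by omega), Equiv.swap_apply_left]
  rw [hfib, bridge hn x cc (n - 1) 1 (by omega) (by omega) _]
  rw [Finset.prod_range_one, Equiv.swap_apply_left, Finset.range_zero, Finset.prod_empty,
    div_one, Finset.range_one, Finset.image_singleton, Equiv.swap_apply_left]
  rw [Finset.powersetCard_zero, Finset.sum_singleton, Finset.prod_empty, div_one]
  simp [Finset.sdiff_empty, Finset.erase_eq]

lemma AA_chain {n : ℕ} (x : Fin n → K) (hx : Function.Injective x) (cc : ℕ → ℕ)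
    (H : ∀ t, t + 1 < n → ∑ i ∈ Finset.range (t + 1), cc i ≤ t) :
    ∀ t, t ≤ n - 1 → AA x cc 0 = AA x cc t := by
  intro t
  induction t with
  | zero => intro _; rfl
  | succ t ih =>
    intro h
    have hn : 0 < n := by omega
    rw [ih (by omega), AA_step x hx cc t (by omega) (H t (by omega))]

open MvPolynomial

/-- If `c` is an anti-Catalan composition of `n-1` (all partial sums `c_1+⋯+c_k < k`
for `1 ≤ k ≤ n-1`), then `⟨x^c⟩_n = (-1)^{n-1}`. -/
theorem stmt11 (n : ℕ) (c : Fin n → ℕ)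
    (hanti : ∀ k, 1 ≤ k → k ≤ n - 1 →
      ∑ i ∈ Finset.univ.filter (fun i : Fin n => i.1 < k), c i < k)
    (hsum : ∑ i, c i = n - 1) :
    DS n (∏ i, X i ^ c i) = (-1) ^ (n - 1) := by
  classical
  rcases Nat.eq_zero_or_pos n with hn0 | hn
  · subst hn0
    simp [DS, denomDS]
  · set x : Fin n → FractionRing (MvPolynomial (Fin n) ℚ) :=
      fun j => algebraMap (MvPolynomial (Fin n) ℚ) (FractionRing (MvPolynomial (Fin n) ℚ)) (X j)
      with hxdef
    set cc : ℕ → ℕ := fun i => c (posf hn i) with hccdef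
    have hx : Function.Injective x := by
      intro i j h
      exact X_injective ((IsFractionRing.injective (MvPolynomial (Fin n) ℚ)
        (FractionRing (MvPolynomial (Fin n) ℚ))) h)
    have hposf : ∀ i : Fin n, posf hn i.1 = i := fun i => Fin.ext (posf_lt hn i.isLt)
    have hccval : ∀ i : Fin n, cc i.1 = c i := fun i => by
      simp only [hccdef]
      rw [hposf i]
    have hDS : DS n (∏ i, X i ^ c i) = ∑ w : Equiv.Perm (Fin n),
        (∏ i ∈ Finset.range n, x (w (posf hn i)) ^ cc i) /
          (∏ i ∈ Finset.range (n - 1), (x (w (posf hn i)) - x (w (posf hn (i + 1))))) := by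
      unfold DS
      apply Finset.sum_congr rfl
      intro w _
      congr 1
      · rw [map_prod, map_prod, ← Fin.prod_univ_eq_prod_range
          (fun i => x (w (posf hn i)) ^ cc i) n]
        apply Finset.prod_congr rfl
        intro i _
        rw [map_pow, map_pow, rename_X, hposf i, hccval i]
      · unfold denomDS
        rw [map_prod, map_prod, ← Fin.prod_univ_eq_prod_range
          (fun i => x (w (posf hn i)) - x (w (posf hn (i + 1)))) (n - 1)]
        apply Finset.prod_congr rfl
        intro i _
        have h1 : posf hn i.1 = (⟨i.1, by have := i.isLt; omega⟩ : Fin n) :=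
          Fin.ext (posf_lt hn (by have := i.isLt; omega))
        have h2 : posf hn (i.1 + 1) = (⟨i.1 + 1, by have := i.isLt; omega⟩ : Fin n) :=
          Fin.ext (posf_lt hn (by have := i.isLt; omega))
        rw [map_sub, map_sub, rename_X, rename_X, h1, h2]
    have hsum' : ∑ i ∈ Finset.range n, cc i = n - 1 := by
      rw [← hsum, ← Fin.sum_univ_eq_sum_range (fun i => cc i) n]
      exact Finset.sum_congr rfl (fun i _ => hccval i)
    have hanti' : ∀ t, t + 1 < n → ∑ i ∈ Finset.range (t + 1), cc i ≤ t := by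
      intro t ht
      have hk := hanti (t + 1) (by omega) (by omega)
      have e1 : (∑ i : Fin n, if i.1 < t + 1 then c i else 0)
          = ∑ i ∈ Finset.range n, (if i < t + 1 then cc i else 0) := by
        rw [← Fin.sum_univ_eq_sum_range (fun i => if i < t + 1 then cc i else 0) n]
        exact Finset.sum_congr rfl (fun i _ => if_congr Iff.rfl (hccval i).symm rfl)
      have e2 : (∑ i ∈ Finset.range n, (if i < t + 1 then cc i else 0))
          = ∑ i ∈ Finset.range (t + 1), cc i := by
        rw [← Finset.sum_filter]
        congr 1
        ext j
        simp only [Finset.mem_filter, Finset.mem_range]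
        omega
      rw [Finset.sum_filter, e1, e2] at hk
      omega
    rw [hDS, perm_to_AA0 hn x cc, AA_chain x hx cc hanti' (n - 1) (le_refl _),
      AA_last x hx cc hn hsum']
end
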